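/- arXiv:1906.03550 — 7 statements merged into one kernel-verified Lean document; each statement's English description precedes it below -/
import Mathlib

section
/- Let G = (V, E) be a locally finite graph equipped with a random walk m = {m_v}, where each m_v is a probability measure supported on the closed neighborhood of v. Define the averaging operator M by (Mf)(x) = Σ_y f(y)·m_x(y). If the Ricci curvature satisfies κ(x,y) ≥ κ for all pairs x, y (where κ(x,y) = 1 - W(m_x, m_y)/d(x,y) and W is the L¹-Wasserstein distance with respect to the graph metric d), then for every k-Lipschitz function f: V → ℝ, the function Mf is k(1-κ)-Lipschitz. -/
/-! For a coupling `A` of `m_x` and `m_y`, `Mf(x) - Mf(y) = ∑ A(u,v) (f(u) - f(v)) ≤ k ∑ A(u,v) d(u,v)`;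
taking the infimum over couplings gives `k W(m_x, m_y) = k (1 - κ(x,y)) d(x,y)`. -/

open Finset

/-- A probability vector on a finite set. -/
def IsProbVec {V : Type*} [Fintype V] (m : V → ℝ) : Prop :=
  (∀ x, 0 ≤ m x) ∧ ∑ x, m x = 1

/-- A coupling between two probability vectors. -/
def IsCoupling {V : Type*} [Fintype V] (m₁ m₂ : V → ℝ) (A : V → V → ℝ) : Prop :=
  (∀ x y, 0 ≤ A x y) ∧ (∀ x, ∑ y, A x y = m₁ x) ∧ (∀ y, ∑ x, A x y = m₂ y)

/-- The L¹-Wasserstein (transportation) distance between two probability vectors,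
with respect to the graph metric. -/
noncomputable def Wdist {V : Type*} [Fintype V] (G : SimpleGraph V) (m₁ m₂ : V → ℝ) : ℝ :=
  sInf {s | ∃ A : V → V → ℝ, IsCoupling m₁ m₂ A ∧
    s = ∑ x, ∑ y, A x y * (G.dist x y : ℝ)}

/-- A random walk on a graph: at each vertex a probability measure supported on
the closed neighborhood. -/
def IsRandomWalk {V : Type*} [Fintype V] (G : SimpleGraph V) (m : V → V → ℝ) : Prop :=
  ∀ x, IsProbVec (m x) ∧ ∀ y, m x y ≠ 0 → y = x ∨ G.Adj x y

/-- Ollivier's Ricci curvature `κ(x,y) = 1 - W(m_x, m_y)/d(x,y)`. -/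
noncomputable def ricci {V : Type*} [Fintype V] (G : SimpleGraph V) (m : V → V → ℝ)
    (x y : V) : ℝ :=
  1 - Wdist G (m x) (m y) / (G.dist x y : ℝ)

/-- The averaging operator `(Mf)(x) = ∑_y f(y)·m_x(y)`. -/
def Mop {V : Type*} [Fintype V] (m : V → V → ℝ) (f : V → ℝ) : V → ℝ :=
  fun x => ∑ y, f y * m x y

noncomputable def transportCost {V : Type*} [Fintype V] (G : SimpleGraph V)
    (A : V → V → ℝ) : ℝ :=
  ∑ u, ∑ v, A u v * (G.dist u v : ℝ)

section Transport

variable {V : Type*} [Fintype V] {G : SimpleGraph V} {m₁ m₂ : V → ℝ}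

theorem IsCoupling.prod (h₁ : IsProbVec m₁) (h₂ : IsProbVec m₂) :
    IsCoupling m₁ m₂ (fun u v => m₁ u * m₂ v) := by
  refine ⟨fun u v => mul_nonneg (h₁.1 u) (h₂.1 v), fun u => ?_, fun v => ?_⟩
  · rw [← Finset.mul_sum, h₂.2, mul_one]
  · rw [← Finset.sum_mul, h₁.2, one_mul]

/-- The easy half of Kantorovich duality. -/
theorem IsCoupling.sub_le_mul_transportCost {A : V → V → ℝ} (hA : IsCoupling m₁ m₂ A)
    {f : V → ℝ} {k : ℝ} (hf : ∀ u v, |f u - f v| ≤ k * (G.dist u v : ℝ)) :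
    ∑ u, f u * m₁ u - ∑ v, f v * m₂ v ≤ k * transportCost G A := by
  have h₁ : ∑ u, f u * m₁ u = ∑ u, ∑ v, f u * A u v := by
    simp only [← Finset.mul_sum, hA.2.1]
  have h₂ : ∑ v, f v * m₂ v = ∑ u, ∑ v, f v * A u v := by
    rw [Finset.sum_comm]
    simp only [← Finset.sum_mul, hA.2.2, mul_comm]
  rw [h₁, h₂, ← Finset.sum_sub_distrib, transportCost, Finset.mul_sum]
  gcongr with u _
  rw [← Finset.sum_sub_distrib, Finset.mul_sum]
  gcongr with v _
  calc f u * A u v - f v * A u v = (f u - f v) * A u v := by ring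
    _ ≤ (k * G.dist u v) * A u v := by
        gcongr
        · exact hA.1 u v
        · exact (le_abs_self _).trans (hf u v)
    _ = k * (A u v * G.dist u v) := by ring

theorem sub_le_mul_Wdist (h₁ : IsProbVec m₁) (h₂ : IsProbVec m₂)
    {f : V → ℝ} {k : ℝ} (hk : 0 ≤ k) (hf : ∀ u v, |f u - f v| ≤ k * (G.dist u v : ℝ)) :
    ∑ u, f u * m₁ u - ∑ v, f v * m₂ v ≤ k * Wdist G m₁ m₂ := by
  have hne : {s | ∃ A, IsCoupling m₁ m₂ A ∧ s = transportCost G A}.Nonempty :=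
    ⟨_, _, IsCoupling.prod h₁ h₂, rfl⟩
  rw [Wdist, ← smul_eq_mul, ← Real.sInf_smul_of_nonneg hk]
  refine le_csInf (hne.smul_set) ?_
  rintro _ ⟨_, ⟨A, hA, rfl⟩, rfl⟩
  exact hA.sub_le_mul_transportCost hf

end Transport

section RandomWalk

variable {V : Type*} [Fintype V] {G : SimpleGraph V} {m : V → V → ℝ}

theorem IsRandomWalk.reachable (hm : IsRandomWalk G m) {x u : V} (hu : m x u ≠ 0) :
    G.Reachable x u := by
  rcases (hm x).2 u hu with rfl | hadj
  · rfl
  · exact hadj.reachable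

/-- Across two components every unit of mass travels at distance `0` (the junk value of
`SimpleGraph.dist`), so even the product plan is free. -/
theorem IsRandomWalk.transportCost_prod_eq_zero (hm : IsRandomWalk G m) {x y : V}
    (hxy : ¬G.Reachable x y) : transportCost G (fun u v => m x u * m y v) = 0 := by
  refine Finset.sum_eq_zero fun u _ => Finset.sum_eq_zero fun v _ => ?_
  by_cases hu : m x u = 0
  · simp [hu]
  by_cases hv : m y v = 0
  · simp [hv]
  have huv : ¬G.Reachable u v := fun h =>
    hxy (((hm.reachable hu).trans h).trans (hm.reachable hv).symm)
  simp [G.dist_eq_zero_of_not_reachable huv]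

theorem Wdist_eq_one_sub_ricci_mul_dist {x y : V} (hd : 0 < G.dist x y) :
    Wdist G (m x) (m y) = (1 - ricci G m x y) * G.dist x y := by
  have : (G.dist x y : ℝ) ≠ 0 := by positivity
  rw [ricci]
  field_simp
  ring

end RandomWalk

/-- Lipschitz contraction. If the Ricci curvature of `G` is at least `κ`,
then for every `k`-Lipschitz function `f`, the function `Mf` is `k(1-κ)`-Lipschitz. -/
theorem lipschitz_contraction {V : Type*} [Fintype V] (G : SimpleGraph V)
    (m : V → V → ℝ) (hm : IsRandomWalk G m) (κ : ℝ)
    (hκ : ∀ x y : V, x ≠ y → κ ≤ ricci G m x y)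
    (k : ℝ) (f : V → ℝ) (hf : ∀ x y : V, |f x - f y| ≤ k * (G.dist x y : ℝ)) :
    ∀ x y : V, |Mop m f x - Mop m f y| ≤ k * (1 - κ) * (G.dist x y : ℝ) := by
  suffices H : ∀ x y, Mop m f x - Mop m f y ≤ k * (1 - κ) * G.dist x y by
    intro x y
    refine abs_sub_le_iff.mpr ⟨H x y, ?_⟩
    simpa only [G.dist_comm] using H y x
  intro x y
  rcases (G.dist x y).eq_zero_or_pos with hd | hd
  · rcases G.dist_eq_zero_iff_eq_or_not_reachable.mp hd with rfl | hxy
    · simp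
    · have h := (IsCoupling.prod (hm x).1 (hm y).1).sub_le_mul_transportCost hf
      rw [hm.transportCost_prod_eq_zero hxy] at h
      simpa [Mop, hd] using h
  · have hk : 0 ≤ k := nonneg_of_mul_nonneg_left ((abs_nonneg _).trans (hf x y)) (by positivity)
    have hκxy := hκ x y (by rintro rfl; simp at hd)
    calc Mop m f x - Mop m f y ≤ k * Wdist G (m x) (m y) := sub_le_mul_Wdist (hm x).1 (hm y).1 hk hf
      _ = k * ((1 - ricci G m x y) * G.dist x y) := by rw [Wdist_eq_one_sub_ricci_mul_dist hd]
      _ ≤ k * ((1 - κ) * G.dist x y) := by gcongr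
      _ = k * (1 - κ) * G.dist x y := by ring
end

section
/- Let G be a graph with a random walk m. If κ(x,y) ≥ κ₀ for every edge xy ∈ E(G), then κ(x,y) ≥ κ₀ for every pair of distinct vertices x, y. -/
open Finset

section Aux
variable {V : Type*} [Fintype V]

lemma Wdist_bddBelow (G : SimpleGraph V) (m₁ m₂ : V → ℝ) :
    BddBelow {s | ∃ A : V → V → ℝ, IsCoupling m₁ m₂ A ∧
      s = ∑ x, ∑ y, A x y * (G.dist x y : ℝ)} := by
  refine ⟨0, ?_⟩
  rintro s ⟨A, hA, rfl⟩
  exact Finset.sum_nonneg fun x _ => Finset.sum_nonneg fun y _ =>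
    mul_nonneg (hA.1 x y) (by positivity)

lemma Wdist_le (G : SimpleGraph V) {m₁ m₂ : V → ℝ} {A : V → V → ℝ}
    (hA : IsCoupling m₁ m₂ A) :
    Wdist G m₁ m₂ ≤ ∑ x, ∑ y, A x y * (G.dist x y : ℝ) :=
  csInf_le (Wdist_bddBelow G m₁ m₂) ⟨A, hA, rfl⟩

lemma prod_coupling {m₁ m₂ : V → ℝ} (h₁ : IsProbVec m₁) (h₂ : IsProbVec m₂) :
    IsCoupling m₁ m₂ (fun x y => m₁ x * m₂ y) := by
  refine ⟨fun x y => mul_nonneg (h₁.1 x) (h₂.1 y), fun x => ?_, fun y => ?_⟩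
  · rw [← Finset.mul_sum, h₂.2, mul_one]
  · rw [← Finset.sum_mul, h₁.2, one_mul]

lemma Wdist_set_nonempty (G : SimpleGraph V) {m₁ m₂ : V → ℝ} (h₁ : IsProbVec m₁)
    (h₂ : IsProbVec m₂) :
    {s | ∃ A : V → V → ℝ, IsCoupling m₁ m₂ A ∧
      s = ∑ x, ∑ y, A x y * (G.dist x y : ℝ)}.Nonempty :=
  ⟨_, _, prod_coupling h₁ h₂, rfl⟩

lemma Wdist_self (G : SimpleGraph V) {m₁ : V → ℝ} (h₁ : IsProbVec m₁) :
    Wdist G m₁ m₁ ≤ 0 := by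
  classical
  have hc : IsCoupling m₁ m₁ (fun x y => if x = y then m₁ x else 0) := by
    refine ⟨fun x y => ?_, fun x => ?_, fun y => ?_⟩
    · dsimp only; split <;> simp [h₁.1 x]
    · simp
    · simp [Finset.sum_ite_eq' Finset.univ y m₁]
  refine (Wdist_le G hc).trans (le_of_eq ?_)
  refine Finset.sum_eq_zero fun x _ => Finset.sum_eq_zero fun y _ => ?_
  by_cases hxy : x = y
  · subst hxy; simp
  · simp [hxy]

lemma Wdist_triangle (G : SimpleGraph V) (hG : G.Connected) {m₁ m₂ m₃ : V → ℝ}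
    (h₁ : IsProbVec m₁) (h₂ : IsProbVec m₂) (h₃ : IsProbVec m₃) :
    Wdist G m₁ m₃ ≤ Wdist G m₁ m₂ + Wdist G m₂ m₃ := by
  have key : ∀ A₁ A₂ : V → V → ℝ, IsCoupling m₁ m₂ A₁ → IsCoupling m₂ m₃ A₂ →
      Wdist G m₁ m₃ ≤ (∑ x, ∑ y, A₁ x y * (G.dist x y : ℝ)) +
        (∑ x, ∑ y, A₂ x y * (G.dist x y : ℝ)) := by
    intro A₁ A₂ hA₁ hA₂
    set t : V → V → V → ℝ := fun x y z => if m₂ y = 0 then 0 else A₁ x y * A₂ y z / m₂ y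
      with ht
    have hm₂ : ∀ y, 0 ≤ m₂ y := h₂.1
    have hA₁0 : ∀ x y, m₂ y = 0 → A₁ x y = 0 := by
      intro x y hy
      have h' := hA₁.2.2 y
      rw [hy] at h'
      exact (Finset.sum_eq_zero_iff_of_nonneg (fun i _ => hA₁.1 i y)).mp h' x
        (Finset.mem_univ x)
    have hA₂0 : ∀ y z, m₂ y = 0 → A₂ y z = 0 := by
      intro y z hy
      have h' := hA₂.2.1 y
      rw [hy] at h'
      exact (Finset.sum_eq_zero_iff_of_nonneg (fun i _ => hA₂.1 y i)).mp h' z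
        (Finset.mem_univ z)
    have htnn : ∀ x y z, 0 ≤ t x y z := by
      intro x y z
      rw [ht]; dsimp only
      split
      · exact le_refl 0
      · exact div_nonneg (mul_nonneg (hA₁.1 x y) (hA₂.1 y z)) (hm₂ y)
    have hrow : ∀ x y, ∑ z, t x y z = A₁ x y := by
      intro x y
      by_cases hy : m₂ y = 0
      · simp [ht, hy, hA₁0 x y hy]
      · simp only [ht, hy, if_false]
        rw [show (fun z => A₁ x y * A₂ y z / m₂ y) = fun z => (A₁ x y / m₂ y) * A₂ y z by
          funext z; ring]
        rw [← Finset.mul_sum, hA₂.2.1 y]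
        field_simp
    have hcol : ∀ y z, ∑ x, t x y z = A₂ y z := by
      intro y z
      by_cases hy : m₂ y = 0
      · simp [ht, hy, hA₂0 y z hy]
      · simp only [ht, hy, if_false]
        rw [show (fun x => A₁ x y * A₂ y z / m₂ y) = fun x => A₁ x y * (A₂ y z / m₂ y) by
          funext x; ring]
        rw [← Finset.sum_mul, hA₁.2.2 y]
        field_simp
    have hB : IsCoupling m₁ m₃ (fun x z => ∑ y, t x y z) := by
      refine ⟨fun x z => Finset.sum_nonneg fun y _ => htnn x y z, fun x => ?_, fun z => ?_⟩
      · rw [Finset.sum_comm]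
        simp_rw [hrow]
        exact hA₁.2.1 x
      · rw [Finset.sum_comm]
        simp_rw [hcol]
        exact hA₂.2.2 z
    refine (Wdist_le G hB).trans ?_
    have step1 : ∑ x, ∑ z, (∑ y, t x y z) * (G.dist x z : ℝ) ≤
        ∑ x, ∑ z, ∑ y, t x y z * ((G.dist x y : ℝ) + (G.dist y z : ℝ)) := by
      refine Finset.sum_le_sum fun x _ => Finset.sum_le_sum fun z _ => ?_
      rw [Finset.sum_mul]
      refine Finset.sum_le_sum fun y _ => ?_
      refine mul_le_mul_of_nonneg_left ?_ (htnn x y z)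
      exact_mod_cast hG.dist_triangle
    refine step1.trans (le_of_eq ?_)
    have expand : ∑ x, ∑ z, ∑ y, t x y z * ((G.dist x y : ℝ) + (G.dist y z : ℝ)) =
        (∑ x, ∑ z, ∑ y, t x y z * (G.dist x y : ℝ)) +
        (∑ x, ∑ z, ∑ y, t x y z * (G.dist y z : ℝ)) := by
      rw [← Finset.sum_add_distrib]
      refine Finset.sum_congr rfl fun x _ => ?_
      rw [← Finset.sum_add_distrib]
      refine Finset.sum_congr rfl fun z _ => ?_
      rw [← Finset.sum_add_distrib]
      refine Finset.sum_congr rfl fun y _ => ?_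
      ring
    rw [expand]
    congr 1
    · refine Finset.sum_congr rfl fun x _ => ?_
      rw [Finset.sum_comm]
      refine Finset.sum_congr rfl fun y _ => ?_
      rw [← Finset.sum_mul, hrow]
    · calc ∑ x, ∑ z, ∑ y, t x y z * (G.dist y z : ℝ)
          = ∑ z, ∑ y, ∑ x, t x y z * (G.dist y z : ℝ) := by
            rw [Finset.sum_comm]
            exact Finset.sum_congr rfl fun z _ => Finset.sum_comm
        _ = ∑ z, ∑ y, A₂ y z * (G.dist y z : ℝ) := by
            refine Finset.sum_congr rfl fun z _ => Finset.sum_congr rfl fun y _ => ?_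
            rw [← Finset.sum_mul, hcol]
        _ = ∑ y, ∑ z, A₂ y z * (G.dist y z : ℝ) := Finset.sum_comm
  have h12 := Wdist_set_nonempty G h₁ h₂
  have h23 := Wdist_set_nonempty G h₂ h₃
  rw [← sub_le_iff_le_add]
  unfold Wdist
  refine le_csInf h12 ?_
  rintro a ⟨A₁, hA₁, rfl⟩
  rw [sub_le_iff_le_add, add_comm, ← sub_le_iff_le_add]
  refine le_csInf h23 ?_
  rintro b ⟨A₂, hA₂, rfl⟩
  rw [sub_le_iff_le_add, add_comm]
  exact key A₁ A₂ hA₁ hA₂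

end Aux

/-- If the Ricci curvature is at least `κ₀` on every edge of a
connected graph, then it is at least `κ₀` for every pair of distinct vertices. -/
theorem ricci_ge_of_ricci_ge_on_edges {V : Type*} [Fintype V] (G : SimpleGraph V)
    (hG : G.Connected) (m : V → V → ℝ) (hm : IsRandomWalk G m) (κ₀ : ℝ)
    (h : ∀ x y : V, G.Adj x y → κ₀ ≤ ricci G m x y) :
    ∀ x y : V, x ≠ y → κ₀ ≤ ricci G m x y := by
  have hedge : ∀ x y : V, G.Adj x y → Wdist G (m x) (m y) ≤ 1 - κ₀ := by
    intro x y hxy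
    have hk := h x y hxy
    rw [ricci, SimpleGraph.dist_eq_one_iff_adj.mpr hxy] at hk
    push_cast at hk
    rw [div_one] at hk
    linarith
  have main : ∀ n : ℕ, ∀ x y : V, G.dist x y = n →
      Wdist G (m x) (m y) ≤ (1 - κ₀) * n := by
    intro n
    induction n with
    | zero =>
      intro x y hd
      have hxy : x = y := (hG.dist_eq_zero_iff).mp hd
      subst hxy
      simpa using Wdist_self G (hm x).1
    | succ n ih =>
      intro x y hd
      obtain ⟨p, hp⟩ := hG.exists_walk_length_eq_dist x y
      cases p with
      | nil => rw [hd] at hp; simp at hp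
      | cons hadj p' =>
        rename_i z
        have hlen : p'.length = n := by
          rw [hd] at hp
          simpa [SimpleGraph.Walk.length_cons] using hp
        have hdz : G.dist z y = n := by
          have hle : G.dist z y ≤ n := hlen ▸ SimpleGraph.dist_le p'
          have htri : G.dist x y ≤ G.dist x z + G.dist z y := hG.dist_triangle
          have hxz : G.dist x z = 1 := SimpleGraph.dist_eq_one_iff_adj.mpr hadj
          omega
        have h1 : Wdist G (m x) (m z) ≤ 1 - κ₀ := hedge x z hadj
        have h2 : Wdist G (m z) (m y) ≤ (1 - κ₀) * n := ih z y hdz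
        have h3 := Wdist_triangle G hG (hm x).1 (hm z).1 (hm y).1
        push_cast
        linarith
  intro x y hxy
  have hd : 0 < (G.dist x y : ℝ) := by exact_mod_cast hG.pos_dist_of_ne hxy
  have hW := main (G.dist x y) x y rfl
  rw [ricci]
  have hdiv : Wdist G (m x) (m y) / (G.dist x y : ℝ) ≤ 1 - κ₀ :=
    (div_le_iff₀ hd).mpr hW
  linarith
end

section
/- Let G be a finite connected graph equipped with a random walk whose Ricci curvature κ(x,y) ≥ κ > 0 for all pairs of distinct vertices. Then κ ≤ 2/diam(G). Moreover, if m_x(x) = α for all x ∈ V(G), then κ ≤ (1-α)·2/diam(G). -/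
open Finset

/-!
Take `x, y` at distance `D = diam G`. Testing the transport cost against the 1-Lipschitz function
`d(x, ·)` and using the triangle inequality once more gives
`W(m_x, m_y) ≥ D - E_{m_x}[d(x, ·)] - E_{m_y}[d(y, ·)]`. A step of the walk from `x` moves
distance at most one, and distance zero with probability `m_x(x)`, so
`E_{m_x}[d(x, ·)] ≤ 1 - m_x(x)`. Hence `κ D ≤ κ(x, y) D = D - W(m_x, m_y) ≤ 2 - m_x(x) - m_y(y)`.
-/

section Transport

variable {V : Type*} [Fintype V] {m₁ m₂ : V → ℝ}

theorem IsProbVec.isCoupling_mul (h₁ : IsProbVec m₁) (h₂ : IsProbVec m₂) :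
    IsCoupling m₁ m₂ fun u v => m₁ u * m₂ v :=
  ⟨fun u v => mul_nonneg (h₁.1 u) (h₂.1 v),
    fun u => by rw [← mul_sum, h₂.2, mul_one],
    fun v => by rw [← sum_mul, h₁.2, one_mul]⟩

/-- Weak Kantorovich duality. -/
theorem IsCoupling.sum_sub_sum_le {A : V → V → ℝ} (hA : IsCoupling m₁ m₂ A)
    {c : V → V → ℝ} {f : V → ℝ} (hf : ∀ u v, f v - f u ≤ c u v) :
    ∑ v, f v * m₂ v - ∑ u, f u * m₁ u ≤ ∑ u, ∑ v, A u v * c u v := by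
  obtain ⟨hA_nonneg, hA_row, hA_col⟩ := hA
  have h₂ : ∑ v, f v * m₂ v = ∑ u, ∑ v, A u v * f v := by
    rw [sum_comm]
    simp only [← hA_col, sum_mul, mul_comm (f _)]
  have h₁ : ∑ u, f u * m₁ u = ∑ u, ∑ v, A u v * f u := by
    simp only [← hA_row, sum_mul, mul_comm (f _)]
  rw [h₂, h₁, ← sum_sub_distrib]
  refine sum_le_sum fun u _ => ?_
  rw [← sum_sub_distrib]
  refine sum_le_sum fun v _ => ?_
  rw [← mul_sub]
  exact mul_le_mul_of_nonneg_left (hf u v) (hA_nonneg u v)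

theorem sum_sub_sum_le_Wdist (G : SimpleGraph V) (h₁ : IsProbVec m₁) (h₂ : IsProbVec m₂) {f : V → ℝ}
    (hf : ∀ u v, f v - f u ≤ G.dist u v) :
    ∑ v, f v * m₂ v - ∑ u, f u * m₁ u ≤ Wdist G m₁ m₂ :=
  le_csInf ⟨_, _, h₁.isCoupling_mul h₂, rfl⟩ fun _ ⟨_, hA, hs⟩ => hs ▸ hA.sum_sub_sum_le hf

theorem SimpleGraph.Connected.dist_sub_sum_sub_sum_le_Wdist {G : SimpleGraph V}
    (hG : G.Connected) (h₁ : IsProbVec m₁) (h₂ : IsProbVec m₂) (x y : V) :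
    G.dist x y - ∑ u, G.dist x u * m₁ u - ∑ v, G.dist y v * m₂ v ≤ Wdist G m₁ m₂ := by
  have hlip : ∀ u v, (G.dist x v : ℝ) - G.dist x u ≤ G.dist u v := fun u v => by
    have := hG.dist_triangle (u := x) (v := u) (w := v)
    rw [sub_le_iff_le_add']
    exact_mod_cast this
  have hvia_y : ∑ v, ((G.dist x y : ℝ) - G.dist y v) * m₂ v ≤ ∑ v, G.dist x v * m₂ v := by
    refine sum_le_sum fun v _ => mul_le_mul_of_nonneg_right ?_ (h₂.1 v)
    have := hG.dist_triangle (u := x) (v := v) (w := y)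
    rw [G.dist_comm (u := v)] at this
    rw [sub_le_iff_le_add]
    exact_mod_cast this
  simp only [sub_mul, sum_sub_distrib, ← mul_sum, h₂.2, mul_one] at hvia_y
  linarith [sum_sub_sum_le_Wdist G h₁ h₂ hlip]

end Transport

section RandomWalk

variable {V : Type*} [Fintype V] {G : SimpleGraph V} {m : V → V → ℝ}

theorem IsRandomWalk.sum_dist_mul_le (hm : IsRandomWalk G m) (x : V) :
    ∑ u, G.dist x u * m x u ≤ 1 - m x x := by
  classical
  have hstep : ∀ u, G.dist x u * m x u ≤ m x u - if x = u then m x u else 0 := fun u => by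
    rcases eq_or_ne x u with rfl | hne
    · simp
    rcases eq_or_ne (m x u) 0 with h0 | h0
    · simp [h0]
    · have hadj := ((hm x).2 u h0).resolve_left hne.symm
      simp [G.dist_eq_one_iff_adj.2 hadj, hne]
  calc ∑ u, G.dist x u * m x u ≤ ∑ u, (m x u - if x = u then m x u else 0) :=
        sum_le_sum fun u _ => hstep u
    _ = 1 - m x x := by rw [sum_sub_distrib, (hm x).1.2, sum_ite_eq]; simp

theorem IsRandomWalk.ricci_mul_dist_le (hm : IsRandomWalk G m) (hG : G.Connected) {x y : V}
    (hxy : x ≠ y) : ricci G m x y * G.dist x y ≤ 2 - m x x - m y y := by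
  have hd : (G.dist x y : ℝ) ≠ 0 := by exact_mod_cast (hG.pos_dist_of_ne hxy).ne'
  have hricci : ricci G m x y * G.dist x y = G.dist x y - Wdist G (m x) (m y) := by
    rw [ricci, sub_mul, div_mul_cancel₀ _ hd, one_mul]
  rw [hricci]
  linarith [hG.dist_sub_sum_sub_sum_le_Wdist (hm x).1 (hm y).1 x y,
    hm.sum_dist_mul_le x, hm.sum_dist_mul_le y]

end RandomWalk

theorem ricci_le_two_div_diam_general {V : Type*} [Fintype V] [Nontrivial V] (G : SimpleGraph V)
    (hG : G.Connected) (m : V → V → ℝ) (hm : IsRandomWalk G m)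
    (κ : ℝ) (hκ : ∀ x y : V, x ≠ y → κ ≤ ricci G m x y) :
    κ ≤ 2 / (G.diam : ℝ) ∧
      ∀ α : ℝ, (∀ x : V, m x x = α) → κ ≤ (1 - α) * (2 / (G.diam : ℝ)) := by
  obtain ⟨x, y, hxy⟩ := G.exists_dist_eq_diam
  have hdiam : G.diam ≠ 0 := SimpleGraph.connected_iff_diam_ne_zero.1 hG
  have hne : x ≠ y := by
    rintro rfl
    exact hdiam (hxy ▸ G.dist_self)
  have hD : (0 : ℝ) < G.diam := by exact_mod_cast Nat.pos_of_ne_zero hdiam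
  have hκD : κ * G.diam ≤ 2 - m x x - m y y := by
    rw [← hxy]
    exact (mul_le_mul_of_nonneg_right (hκ x y hne) (Nat.cast_nonneg _)).trans
      (hm.ricci_mul_dist_le hG hne)
  have hx := (hm x).1.1 x
  have hy := (hm y).1.1 y
  refine ⟨?_, fun α hα => ?_⟩
  · rw [le_div_iff₀ hD]
    linarith
  · rw [mul_div_assoc', le_div_iff₀ hD]
    linarith [hα x, hα y]

/-- On a finite connected graph with at least two vertices whose
Ricci curvature is at least `κ > 0`, we have `κ ≤ 2/diam(G)`; moreover if `m_x(x) = α`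
for all `x`, then `κ ≤ (1-α)·2/diam(G)`. -/
theorem ricci_le_two_div_diam {V : Type*} [Fintype V] [Nontrivial V] (G : SimpleGraph V)
    (hG : G.Connected) (m : V → V → ℝ) (hm : IsRandomWalk G m)
    (κ : ℝ) (hκpos : 0 < κ) (hκ : ∀ x y : V, x ≠ y → κ ≤ ricci G m x y) :
    κ ≤ 2 / (G.diam : ℝ) ∧
      ∀ α : ℝ, (∀ x : V, m x x = α) → κ ≤ (1 - α) * (2 / (G.diam : ℝ)) :=
  ricci_le_two_div_diam_general G hG m hm κ hκ
end

section
/- Let G be a graph with a random walk m where each m_x is supported on the closed neighborhood of x (so the support of m_x has diameter at most 2). Let φ: V(G) → ℝ be an α-Lipschitz function with α ≤ 1. Then for every vertex x and every λ > 0, (M e^{λφ})(x) ≤ exp(λ·(Mφ)(x) + (1/2)·λ²·e^{2λ}·α²), where M is the averaging operator (Mf)(x) = Σ_y f(y) m_x(y). -/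
open Finset

/-! On the support of `m x`, `φ` stays within `max α 0 ≤ 1` of `φ x`. Hence `φ - Mφ(x) ≤ 2` there
and the variance of `φ` under `m x` is at most `α²`. The second-order bound
`e^u ≤ 1 + u + (u²/2)·e^b` for `u ≤ b`, applied to `u = λ(φ y - Mφ(x)) ≤ 2λ` and averaged, gives
`M e^{λφ}(x) ≤ e^{λ Mφ(x)}(1 + ½λ²e^{2λ} Var) ≤ e^{λ Mφ(x) + ½λ²e^{2λ}α²}`. -/

open Real

theorem exp_le_one_add_add_sq_div_two_mul_exp {u b : ℝ} (hb : 0 ≤ b) (hu : u ≤ b) :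
    exp u ≤ 1 + u + u ^ 2 / 2 * exp b := by
  set K := exp b
  have hK : 1 ≤ K := one_le_exp hb
  set h : ℝ → ℝ := fun v => 1 + v + v ^ 2 / 2 * K - exp v with h_def
  have h_deriv (v : ℝ) : HasDerivAt h (1 + v * K - exp v) v := by
    have := (((hasDerivAt_id v).const_add 1).add
      (((hasDerivAt_pow 2 v).div_const 2).mul_const K)).sub (hasDerivAt_exp v)
    exact this.congr_deriv (by norm_num)
  have h_diff : Differentiable ℝ h := fun v => (h_deriv v).differentiableAt
  have h_zero : h 0 = 0 := by simp [h_def]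
  suffices 0 ≤ h u by simp only [h_def] at this; linarith
  rcases le_total u 0 with hu0 | hu0
  · -- `h' v = 1 + v K - e^v ≤ 1 + v - e^v ≤ 0` for `v ≤ 0`
    have : AntitoneOn h (Set.Iic 0) := by
      refine antitoneOn_of_deriv_nonpos (convex_Iic 0) h_diff.continuous.continuousOn
        h_diff.differentiableOn fun v hv => ?_
      rw [interior_Iic, Set.mem_Iio] at hv
      rw [(h_deriv v).deriv]
      nlinarith [add_one_le_exp v]
    simpa [h_zero] using this (Set.mem_Iic.mpr hu0) Set.self_mem_Iic hu0
  · -- `e^v - 1 ≤ v e^v ≤ v K` for `0 ≤ v ≤ b`, from `1 - v ≤ e^{-v}`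
    have : MonotoneOn h (Set.Icc 0 b) := by
      refine monotoneOn_of_deriv_nonneg (convex_Icc 0 b) h_diff.continuous.continuousOn
        h_diff.differentiableOn fun v hv => ?_
      rw [interior_Icc, Set.mem_Ioo] at hv
      rw [(h_deriv v).deriv]
      have h_inv : exp v * exp (-v) = 1 := by rw [← exp_add, add_neg_cancel, exp_zero]
      have h_le : exp v ≤ K := exp_le_exp.mpr hv.2.le
      nlinarith [add_one_le_exp (-v), exp_pos v]
    simpa [h_zero] using this (Set.left_mem_Icc.mpr hb) ⟨hu0, hu⟩ hu0

namespace IsProbVec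

variable {ι : Type*} [Fintype ι] {μ : ι → ℝ}

theorem sum_const_mul (hμ : IsProbVec μ) (a : ℝ) : ∑ i, a * μ i = a := by
  rw [← mul_sum, hμ.2, mul_one]

theorem sum_sub_mul (hμ : IsProbVec μ) (f : ι → ℝ) (a : ℝ) :
    ∑ i, (f i - a) * μ i = ∑ i, f i * μ i - a := by
  simp only [sub_mul, sum_sub_distrib, hμ.sum_const_mul]

theorem sum_mul_le_sum_mul (hμ : IsProbVec μ) {f g : ι → ℝ} (h : ∀ i, μ i ≠ 0 → f i ≤ g i) :
    ∑ i, f i * μ i ≤ ∑ i, g i * μ i := by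
  refine sum_le_sum fun i _ => ?_
  rcases eq_or_ne (μ i) 0 with hi | hi
  · simp [hi]
  · exact mul_le_mul_of_nonneg_right (h i hi) (hμ.1 i)

theorem sum_sq_sub_mean_mul_le (hμ : IsProbVec μ) (f : ι → ℝ) (a : ℝ) :
    ∑ i, (f i - ∑ j, f j * μ j) ^ 2 * μ i ≤ ∑ i, (f i - a) ^ 2 * μ i := by
  set c := ∑ j, f j * μ j
  have h_expand (i : ι) : (f i - a) ^ 2 * μ i =
      (f i - c) ^ 2 * μ i + 2 * (c - a) * ((f i - c) * μ i) + (c - a) ^ 2 * μ i := by ring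
  rw [sum_congr rfl fun i _ => h_expand i, sum_add_distrib, sum_add_distrib, ← mul_sum,
    hμ.sum_sub_mul, sub_self, hμ.sum_const_mul]
  nlinarith [sq_nonneg (c - a)]

variable {f : ι → ℝ} {a r : ℝ}

theorem sum_sq_sub_mul_le (hμ : IsProbVec μ) (h : ∀ i, μ i ≠ 0 → |f i - a| ≤ r) :
    ∑ i, (f i - a) ^ 2 * μ i ≤ r ^ 2 :=
  (hμ.sum_mul_le_sum_mul fun i hi => by
    rw [← sq_abs]
    exact pow_le_pow_left₀ (abs_nonneg _) (h i hi) 2).trans_eq (hμ.sum_const_mul _)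

theorem sub_mean_le (hμ : IsProbVec μ) (h : ∀ i, μ i ≠ 0 → |f i - a| ≤ r) {i : ι}
    (hi : μ i ≠ 0) : f i - ∑ j, f j * μ j ≤ 2 * r := by
  have h_mean : a - r ≤ ∑ j, f j * μ j :=
    calc a - r = ∑ j, (a - r) * μ j := (hμ.sum_const_mul _).symm
      _ ≤ ∑ j, f j * μ j := hμ.sum_mul_le_sum_mul fun j hj => by
        linarith [(abs_le.mp (h j hj)).1]
  linarith [(abs_le.mp (h i hi)).2]

theorem sum_exp_mul_le (hμ : IsProbVec μ) {l b : ℝ} (hb : 0 ≤ b)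
    (h : ∀ i, μ i ≠ 0 → l * (f i - ∑ j, f j * μ j) ≤ b) :
    ∑ i, exp (l * f i) * μ i ≤ exp (l * ∑ i, f i * μ i +
      (1 / 2) * l ^ 2 * exp b * ∑ i, (f i - ∑ j, f j * μ j) ^ 2 * μ i) := by
  set c := ∑ j, f j * μ j
  set v := ∑ i, (f i - c) ^ 2 * μ i
  have h_split (i : ι) : exp (l * f i) = exp (l * c) * exp (l * (f i - c)) := by
    rw [← exp_add]; ring_nf
  have h_expand (i : ι) :
      exp (l * c) * (1 + l * (f i - c) + (l * (f i - c)) ^ 2 / 2 * exp b) * μ i =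
        exp (l * c) * (1 * μ i + l * ((f i - c) * μ i) +
          (1 / 2) * l ^ 2 * exp b * ((f i - c) ^ 2 * μ i)) := by ring
  calc ∑ i, exp (l * f i) * μ i
      ≤ ∑ i, exp (l * c) * (1 + l * (f i - c) + (l * (f i - c)) ^ 2 / 2 * exp b) * μ i :=
        hμ.sum_mul_le_sum_mul fun i hi => by
          rw [h_split]
          gcongr
          exact exp_le_one_add_add_sq_div_two_mul_exp hb (h i hi)
    _ = exp (l * c) * (1 + (1 / 2) * l ^ 2 * exp b * v) := by
        rw [sum_congr rfl fun i _ => h_expand i]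
        simp only [← mul_sum, sum_add_distrib, hμ.sum_sub_mul, hμ.2]
        ring
    _ ≤ exp (l * c) * exp ((1 / 2) * l ^ 2 * exp b * v) := by
        gcongr
        linarith [add_one_le_exp ((1 / 2) * l ^ 2 * exp b * v)]
    _ = exp (l * c + (1 / 2) * l ^ 2 * exp b * v) := (exp_add _ _).symm

end IsProbVec

theorem IsRandomWalk.abs_sub_le_max {V : Type*} [Fintype V] {G : SimpleGraph V}
    {m : V → V → ℝ} (hm : IsRandomWalk G m) {α : ℝ} {φ : V → ℝ}
    (hφ : ∀ x y : V, |φ x - φ y| ≤ α * (G.dist x y : ℝ)) {x y : V} (hxy : m x y ≠ 0) :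
    |φ y - φ x| ≤ max α 0 := by
  rcases (hm x).2 y hxy with rfl | hadj
  · simp
  · have := hφ y x
    rw [G.dist_comm, SimpleGraph.dist_eq_one_iff_adj.mpr hadj, Nat.cast_one, mul_one] at this
    exact this.trans (le_max_left _ _)

/-- one-step exponential moment bound. For an `α`-Lipschitz function `φ`
with `α ≤ 1` and any `λ > 0`,
`(M e^{λφ})(x) ≤ exp(λ·(Mφ)(x) + (1/2)·λ²·e^{2λ}·α²)`. -/
theorem averaging_exp_bound {V : Type*} [Fintype V] (G : SimpleGraph V)
    (m : V → V → ℝ) (hm : IsRandomWalk G m)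
    (α : ℝ) (hα : α ≤ 1) (φ : V → ℝ)
    (hφ : ∀ x y : V, |φ x - φ y| ≤ α * (G.dist x y : ℝ))
    (l : ℝ) (hl : 0 < l) (x : V) :
    Mop m (fun y => Real.exp (l * φ y)) x ≤
      Real.exp (l * Mop m φ x + (1 / 2) * l ^ 2 * Real.exp (2 * l) * α ^ 2) := by
  have hμ := (hm x).1
  have h_supp (y : V) (hy : m x y ≠ 0) : |φ y - φ x| ≤ max α 0 := hm.abs_sub_le_max hφ hy
  have h_dev (y : V) (hy : m x y ≠ 0) : l * (φ y - Mop m φ x) ≤ 2 * l := by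
    have h_le : φ y - Mop m φ x ≤ 2 * max α 0 := hμ.sub_mean_le h_supp hy
    have : max α 0 ≤ 1 := max_le hα zero_le_one
    nlinarith
  have h_var : ∑ y, (φ y - Mop m φ x) ^ 2 * m x y ≤ α ^ 2 := calc
    _ ≤ ∑ y, (φ y - φ x) ^ 2 * m x y := hμ.sum_sq_sub_mean_mul_le φ (φ x)
    _ ≤ max α 0 ^ 2 := hμ.sum_sq_sub_mul_le h_supp
    _ ≤ α ^ 2 := by rcases le_total α 0 with h | h <;> simp [h, sq_nonneg]
  calc Mop m (fun y => exp (l * φ y)) x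
      ≤ exp (l * Mop m φ x + (1 / 2) * l ^ 2 * exp (2 * l) *
          ∑ y, (φ y - Mop m φ x) ^ 2 * m x y) := hμ.sum_exp_mul_le (by positivity) h_dev
    _ ≤ _ := by gcongr
end

section
/- Let G = (V, E) be a finite graph equipped with an ergodic random walk m with invariant distribution ν, and suppose the Ricci curvature κ(x,y) ≥ κ > 0 for all pairs of distinct vertices. Then for any 1-Lipschitz function f: V → ℝ and any t ≥ 1, ν(f - E_ν[f] > t) ≤ exp(-t²κ/7) and ν(f - E_ν[f] < -t) ≤ exp(-t²κ/7). -/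
open Finset Filter

namespace ConcAux

variable {V : Type*} [Fintype V]

/-- One-sided Lipschitz property with respect to the graph distance. -/
def Lip (G : SimpleGraph V) (L : ℝ) (f : V → ℝ) : Prop :=
  ∀ x y : V, f x - f y ≤ L * (G.dist x y : ℝ)

lemma walk_bound {G : SimpleGraph V} {f : V → ℝ}
    (hf : ∀ x y : V, G.Adj x y → |f x - f y| ≤ 1) {u v : V} (p : G.Walk u v) :
    f u - f v ≤ (p.length : ℝ) := by
  induction p with
  | nil => simp
  | cons h q ih =>
    have h1 := (abs_le.mp (hf _ _ h)).2
    rw [SimpleGraph.Walk.length_cons]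
    push_cast
    linarith

lemma lip_one (G : SimpleGraph V) (hG : G.Connected) (f : V → ℝ)
    (hf : ∀ x y : V, G.Adj x y → |f x - f y| ≤ 1) : Lip G 1 f := by
  intro x y
  obtain ⟨p, hp⟩ := hG.exists_walk_length_eq_dist x y
  rw [one_mul, ← hp]
  exact walk_bound hf p

lemma prod_coupling {m₁ m₂ : V → ℝ} (h₁ : IsProbVec m₁) (h₂ : IsProbVec m₂) :
    IsCoupling m₁ m₂ (fun z w => m₁ z * m₂ w) :=
  ⟨fun z w => mul_nonneg (h₁.1 z) (h₂.1 w),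
   fun z => by rw [← Finset.mul_sum, h₂.2, mul_one],
   fun w => by rw [← Finset.sum_mul, h₁.2, one_mul]⟩

lemma Wset_nonempty (G : SimpleGraph V) {m₁ m₂ : V → ℝ}
    (h₁ : IsProbVec m₁) (h₂ : IsProbVec m₂) :
    {s | ∃ A : V → V → ℝ, IsCoupling m₁ m₂ A ∧
      s = ∑ x, ∑ y, A x y * (G.dist x y : ℝ)}.Nonempty :=
  ⟨_, _, prod_coupling h₁ h₂, rfl⟩

lemma Wdist_nonneg (G : SimpleGraph V) (m₁ m₂ : V → ℝ) : 0 ≤ Wdist G m₁ m₂ := by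
  apply Real.sInf_nonneg
  rintro s ⟨A, hA, rfl⟩
  exact Finset.sum_nonneg fun z _ => Finset.sum_nonneg fun w _ =>
    mul_nonneg (hA.1 z w) (Nat.cast_nonneg _)

lemma Mop_sub_le (G : SimpleGraph V) {m : V → V → ℝ} (hm : IsRandomWalk G m) {L : ℝ}
    (hL : 0 ≤ L) {h : V → ℝ} (hLip : Lip G L h) (x y : V) :
    Mop m h x - Mop m h y ≤ L * Wdist G (m x) (m y) := by
  have hx := (hm x).1; have hy := (hm y).1
  have key : ∀ A : V → V → ℝ, IsCoupling (m x) (m y) A →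
      Mop m h x - Mop m h y ≤ L * ∑ z, ∑ w, A z w * (G.dist z w : ℝ) := by
    intro A hA
    obtain ⟨hA0, hA1, hA2⟩ := hA
    have e1 : Mop m h x = ∑ z, ∑ w, h z * A z w := by
      simp only [Mop]
      refine Finset.sum_congr rfl fun z _ => ?_
      rw [← hA1 z, Finset.mul_sum]
    have e2 : Mop m h y = ∑ z, ∑ w, h w * A z w := by
      simp only [Mop]
      rw [Finset.sum_comm]
      refine Finset.sum_congr rfl fun w _ => ?_
      rw [← hA2 w, Finset.mul_sum]
    rw [e1, e2, ← Finset.sum_sub_distrib, Finset.mul_sum]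
    refine Finset.sum_le_sum fun z _ => ?_
    rw [← Finset.sum_sub_distrib, Finset.mul_sum]
    refine Finset.sum_le_sum fun w _ => ?_
    have h1 := hLip z w
    have h0 := hA0 z w
    nlinarith [mul_le_mul_of_nonneg_right h1 h0]
  rcases eq_or_lt_of_le hL with hL0 | hLpos
  · obtain ⟨s0, hs0⟩ := Wset_nonempty G hx hy
    obtain ⟨A, hA, rfl⟩ := hs0
    have h1 := key A hA
    rw [← hL0] at h1 ⊢
    simpa using h1
  · have h1 : (Mop m h x - Mop m h y) / L ≤ Wdist G (m x) (m y) := by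
      apply le_csInf (Wset_nonempty G hx hy)
      rintro s ⟨A, hA, rfl⟩
      rw [div_le_iff₀ hLpos]
      calc Mop m h x - Mop m h y ≤ L * ∑ z, ∑ w, A z w * (G.dist z w : ℝ) := key A hA
        _ = (∑ z, ∑ w, A z w * (G.dist z w : ℝ)) * L := mul_comm _ _
    calc Mop m h x - Mop m h y = (Mop m h x - Mop m h y) / L * L := by
          field_simp
      _ ≤ Wdist G (m x) (m y) * L := mul_le_mul_of_nonneg_right h1 hL
      _ = L * Wdist G (m x) (m y) := mul_comm _ _

lemma dist_le_one (G : SimpleGraph V) {m : V → V → ℝ} (hm : IsRandomWalk G m)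
    {x z : V} (hz : m x z ≠ 0) : G.dist x z ≤ 1 := by
  rcases (hm x).2 z hz with rfl | hadj
  · simp [SimpleGraph.dist_self]
  · calc G.dist x z ≤ (SimpleGraph.Walk.cons hadj SimpleGraph.Walk.nil).length :=
        SimpleGraph.dist_le _
      _ = 1 := by simp

lemma lip_close (G : SimpleGraph V) {m : V → V → ℝ} (hm : IsRandomWalk G m)
    {L : ℝ} {h : V → ℝ} (hL : 0 ≤ L) (hLip : Lip G L h) {x z : V} (hz : m x z ≠ 0) :
    |h z - h x| ≤ L := by
  have h1 : (G.dist x z : ℝ) ≤ 1 := by exact_mod_cast dist_le_one G hm hz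
  have h2 : (G.dist z x : ℝ) ≤ 1 := by rw [SimpleGraph.dist_comm]; exact h1
  have hd0 : (0:ℝ) ≤ (G.dist z x : ℝ) := Nat.cast_nonneg _
  have hd0' : (0:ℝ) ≤ (G.dist x z : ℝ) := Nat.cast_nonneg _
  rw [abs_sub_le_iff]
  constructor
  · exact le_trans (hLip z x) (by nlinarith)
  · exact le_trans (hLip x z) (by nlinarith)

lemma Mop_close (G : SimpleGraph V) {m : V → V → ℝ} (hm : IsRandomWalk G m)
    {L : ℝ} {h : V → ℝ} (hL : 0 ≤ L) (hLip : Lip G L h) (x : V) :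
    |Mop m h x - h x| ≤ L := by
  have hx := (hm x).1
  have e : Mop m h x - h x = ∑ z, (h z - h x) * m x z := by
    have e1 : ∑ z, (h z - h x) * m x z
        = (∑ z, h z * m x z) - h x * ∑ z, m x z := by
      rw [Finset.mul_sum, ← Finset.sum_sub_distrib]
      exact Finset.sum_congr rfl fun z _ => by ring
    rw [e1, hx.2, mul_one]
    rfl
  rw [e]
  calc |∑ z, (h z - h x) * m x z| ≤ ∑ z, |(h z - h x) * m x z| :=
      Finset.abs_sum_le_sum_abs _ _
    _ ≤ ∑ z, L * m x z := by
      refine Finset.sum_le_sum fun z _ => ?_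
      by_cases hz : m x z = 0
      · simp [hz]
      · rw [abs_mul, abs_of_nonneg (hx.1 z)]
        exact mul_le_mul_of_nonneg_right (lip_close G hm hL hLip hz) (hx.1 z)
    _ = L := by rw [← Finset.mul_sum, hx.2, mul_one]

lemma exp_quad {y : ℝ} (hy : |y| ≤ 1) : Real.exp y ≤ 1 + y + (13/18) * y^2 := by
  have h := Real.exp_bound hy (n := 3) (by norm_num)
  have hs : ∑ i ∈ Finset.range 3, y ^ i / (i.factorial : ℝ) = 1 + y + y^2/2 := by
    norm_num [Finset.sum_range_succ, Nat.factorial]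
  rw [hs] at h
  have h3 : |y|^3 ≤ y^2 := by
    have e : |y|^3 = y^2 * |y| := by
      rw [pow_succ, sq_abs]
    rw [e]
    nlinarith [abs_nonneg y, sq_nonneg y]
  have h2 := (abs_le.mp h).2
  norm_num [Nat.factorial] at h2
  nlinarith

lemma step_bound (G : SimpleGraph V) {m : V → V → ℝ} (hm : IsRandomWalk G m)
    {L : ℝ} (hL : 0 ≤ L) (h2L : 2*L ≤ 1) {h : V → ℝ} (hLip : Lip G L h) (x : V) :
    Mop m (fun z => Real.exp (h z)) x ≤ Real.exp (Mop m h x + (13/18) * L^2) := by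
  have hx := (hm x).1
  set μ := Mop m h x with hμ
  have hμx : |μ - h x| ≤ L := Mop_close G hm hL hLip x
  have hzz : ∀ z, m x z ≠ 0 → |h z - μ| ≤ 2*L := by
    intro z hz
    have h1 := lip_close G hm hL hLip hz
    calc |h z - μ| ≤ |h z - h x| + |h x - μ| := abs_sub_le _ _ _
      _ ≤ L + L := by
        have := abs_sub_comm (h x) μ
        refine add_le_add h1 ?_
        rw [abs_sub_comm]; exact hμx
      _ = 2*L := by ring
  have hsum0 : ∑ z, (h z - μ) * m x z = 0 := by
    have e1 : ∑ z, (h z - μ) * m x z = (∑ z, h z * m x z) - μ * ∑ z, m x z := by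
      rw [Finset.mul_sum, ← Finset.sum_sub_distrib]
      exact Finset.sum_congr rfl fun z _ => by ring
    rw [e1, hx.2, mul_one]
    have : μ = ∑ z, h z * m x z := rfl
    linarith
  have hvar : ∑ z, (h z - μ)^2 * m x z ≤ L^2 := by
    have hid : ∑ z, (h z - h x)^2 * m x z
        = ∑ z, (h z - μ)^2 * m x z + (μ - h x)^2 := by
      have e : ∀ z, (h z - h x)^2 * m x z
          = (h z - μ)^2 * m x z + (2*(μ - h x)) * ((h z - μ) * m x z)
            + (μ - h x)^2 * m x z := fun z => by ring
      rw [Finset.sum_congr rfl fun z _ => e z, Finset.sum_add_distrib,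
        Finset.sum_add_distrib, ← Finset.mul_sum, hsum0, mul_zero, add_zero,
        ← Finset.mul_sum, hx.2, mul_one]
    have hb : ∑ z, (h z - h x)^2 * m x z ≤ ∑ z, L^2 * m x z := by
      refine Finset.sum_le_sum fun z _ => ?_
      by_cases hz : m x z = 0
      · simp [hz]
      · refine mul_le_mul_of_nonneg_right ?_ (hx.1 z)
        have h1 := abs_le.mp (lip_close G hm hL hLip hz)
        exact sq_le_sq' h1.1 h1.2
    have hb2 : ∑ z, L^2 * m x z = L^2 := by rw [← Finset.mul_sum, hx.2, mul_one]
    nlinarith [sq_nonneg (μ - h x)]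
  have key : ∀ z, Real.exp (h z) * m x z
      ≤ (1 + (h z - μ) + (13/18)*(h z - μ)^2) * Real.exp μ * m x z := by
    intro z
    by_cases hz : m x z = 0
    · simp [hz]
    · have h1 : |h z - μ| ≤ 1 := le_trans (hzz z hz) h2L
      have h2 := exp_quad h1
      have e : Real.exp (h z) = Real.exp (h z - μ) * Real.exp μ := by
        rw [← Real.exp_add]; ring_nf
      rw [e]
      exact mul_le_mul_of_nonneg_right
        (mul_le_mul_of_nonneg_right h2 (Real.exp_pos μ).le) (hx.1 z)
  calc Mop m (fun z => Real.exp (h z)) x = ∑ z, Real.exp (h z) * m x z := rfl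
    _ ≤ ∑ z, (1 + (h z - μ) + (13/18)*(h z - μ)^2) * Real.exp μ * m x z :=
        Finset.sum_le_sum fun z _ => key z
    _ = Real.exp μ * (∑ z, m x z) + Real.exp μ * (∑ z, (h z - μ) * m x z)
        + Real.exp μ * ((13/18) * ∑ z, (h z - μ)^2 * m x z) := by
        simp only [Finset.mul_sum, ← Finset.sum_add_distrib]
        exact Finset.sum_congr rfl fun z _ => by ring
    _ = Real.exp μ * (1 + (13/18) * ∑ z, (h z - μ)^2 * m x z) := by
        rw [hx.2, hsum0]; ring
    _ ≤ Real.exp μ * (1 + (13/18) * L^2) := by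
        have hq : (13:ℝ)/18 * ∑ z, (h z - μ)^2 * m x z ≤ (13/18) * L^2 :=
          mul_le_mul_of_nonneg_left hvar (by norm_num)
        have := Real.exp_pos μ
        nlinarith
    _ ≤ Real.exp μ * Real.exp ((13/18) * L^2) := by
        have h1 := Real.add_one_le_exp ((13/18) * L^2)
        have := (Real.exp_pos μ).le
        nlinarith
    _ = Real.exp (μ + (13/18)*L^2) := (Real.exp_add _ _).symm

lemma Mop_mono (G : SimpleGraph V) {m : V → V → ℝ} (hm : IsRandomWalk G m)
    {g₁ g₂ : V → ℝ} (hg : ∀ z, g₁ z ≤ g₂ z) (x : V) : Mop m g₁ x ≤ Mop m g₂ x := by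
  simp only [Mop]
  exact Finset.sum_le_sum fun z _ => mul_le_mul_of_nonneg_right (hg z) ((hm x).1.1 z)

lemma Mop_const_mul (m : V → V → ℝ) (c : ℝ) (g : V → ℝ) (x : V) :
    Mop m (fun z => c * g z) x = c * Mop m g x := by
  simp only [Mop, Finset.mul_sum]
  exact Finset.sum_congr rfl fun z _ => by ring

lemma Mop_mul_const (m : V → V → ℝ) (c : ℝ) (g : V → ℝ) (x : V) :
    Mop m (fun z => g z * c) x = Mop m g x * c := by
  simp only [Mop, Finset.sum_mul]
  exact Finset.sum_congr rfl fun z _ => by ring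

lemma lip_contract (G : SimpleGraph V) {m : V → V → ℝ} (hm : IsRandomWalk G m) {κ : ℝ}
    (hW : ∀ x y : V, x ≠ y → Wdist G (m x) (m y) ≤ (1-κ) * (G.dist x y : ℝ))
    {L : ℝ} {h : V → ℝ} (hL : 0 ≤ L) (hκ1 : κ ≤ 1) (hLip : Lip G L h) :
    Lip G ((1-κ)*L) (Mop m h) := by
  intro x y
  rcases eq_or_ne x y with rfl | hxy
  · simp [SimpleGraph.dist_self]
  · calc Mop m h x - Mop m h y ≤ L * Wdist G (m x) (m y) := Mop_sub_le G hm hL hLip x y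
      _ ≤ L * ((1-κ) * (G.dist x y : ℝ)) := mul_le_mul_of_nonneg_left (hW x y hxy) hL
      _ = (1-κ)*L * (G.dist x y : ℝ) := by ring

lemma iter_lip (G : SimpleGraph V) (hG : G.Connected) {m : V → V → ℝ}
    (hm : IsRandomWalk G m) {κ : ℝ} (hκ1 : κ ≤ 1)
    (hW : ∀ x y : V, x ≠ y → Wdist G (m x) (m y) ≤ (1-κ) * (G.dist x y : ℝ))
    {f : V → ℝ} (hfl : Lip G 1 f) (n : ℕ) :
    Lip G ((1-κ)^n) ((Mop m)^[n] f) := by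
  induction n with
  | zero => simpa using hfl
  | succ n ih =>
    rw [Function.iterate_succ_apply', pow_succ]
    have h1 := lip_contract G hm hW (pow_nonneg (by linarith) n) hκ1 ih
    rwa [mul_comm] at h1

lemma iter_bound (G : SimpleGraph V) (hG : G.Connected) {m : V → V → ℝ}
    (hm : IsRandomWalk G m) {κ : ℝ} (hκpos : 0 < κ) (hκ1 : κ ≤ 1)
    (hW : ∀ x y : V, x ≠ y → Wdist G (m x) (m y) ≤ (1-κ) * (G.dist x y : ℝ))
    {f : V → ℝ} (hfl : Lip G 1 f) {lam : ℝ} (hlam : 0 ≤ lam) (h2lam : 2*lam ≤ 1) :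
    ∀ (n : ℕ) (x : V), (Mop m)^[n] (fun z => Real.exp (lam * f z)) x ≤
      Real.exp (lam * (Mop m)^[n] f x
        + (13/18) * lam^2 * ∑ i ∈ Finset.range n, ((1-κ)^2)^i) := by
  intro n
  induction n with
  | zero => intro x; simp
  | succ n ih =>
    intro x
    have h1κ : (0:ℝ) ≤ 1 - κ := by linarith
    have hLn : Lip G ((1-κ)^n) ((Mop m)^[n] f) := iter_lip G hG hm hκ1 hW hfl n
    have hLip' : Lip G (lam * (1-κ)^n) (fun z => lam * (Mop m)^[n] f z) := by
      intro z w
      have h1 := hLn z w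
      calc lam * (Mop m)^[n] f z - lam * (Mop m)^[n] f w
          = lam * ((Mop m)^[n] f z - (Mop m)^[n] f w) := by ring
        _ ≤ lam * ((1-κ)^n * (G.dist z w : ℝ)) := mul_le_mul_of_nonneg_left h1 hlam
        _ = lam * (1-κ)^n * (G.dist z w : ℝ) := by ring
    have hLpos : 0 ≤ lam * (1-κ)^n := mul_nonneg hlam (pow_nonneg h1κ n)
    have h2L : 2 * (lam * (1-κ)^n) ≤ 1 := by
      have hp1 : (1-κ)^n ≤ 1 := pow_le_one₀ h1κ (by linarith)
      nlinarith
    rw [Function.iterate_succ_apply', Function.iterate_succ_apply' (Mop m) n f]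
    set C := (13:ℝ)/18 * lam^2 * ∑ i ∈ Finset.range n, ((1-κ)^2)^i with hC
    calc Mop m ((Mop m)^[n] fun z => Real.exp (lam * f z)) x
        ≤ Mop m (fun z => Real.exp (lam * (Mop m)^[n] f z + C)) x :=
          Mop_mono G hm (fun z => ih z) x
      _ = Mop m (fun z => Real.exp (lam * (Mop m)^[n] f z) * Real.exp C) x := by
          simp only [Real.exp_add]
      _ = Mop m (fun z => Real.exp (lam * (Mop m)^[n] f z)) x * Real.exp C :=
          Mop_mul_const m (Real.exp C) _ x
      _ ≤ Real.exp (Mop m (fun z => lam * (Mop m)^[n] f z) x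
            + (13/18)*(lam*(1-κ)^n)^2) * Real.exp C :=
          mul_le_mul_of_nonneg_right (step_bound G hm hLpos h2L hLip' x)
            (Real.exp_pos C).le
      _ = Real.exp (lam * Mop m ((Mop m)^[n] f) x
            + (13/18)*(lam*(1-κ)^n)^2) * Real.exp C := by
          rw [Mop_const_mul]
      _ = Real.exp (lam * Mop m ((Mop m)^[n] f) x
            + (13/18) * lam^2 * ∑ i ∈ Finset.range (n+1), ((1-κ)^2)^i) := by
          rw [← Real.exp_add]
          congr 1
          rw [Finset.sum_range_succ, hC, mul_pow, pow_right_comm]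
          ring

lemma geom_le {κ : ℝ} (hκpos : 0 < κ) (hκ1 : κ ≤ 1) (n : ℕ) :
    ∑ i ∈ Finset.range n, (1-κ)^i ≤ 1/κ := by
  have hne : (1-κ:ℝ) ≠ 1 := by intro h; linarith
  rw [geom_sum_eq hne]
  have e : ((1-κ)^n - 1) / (1 - κ - 1) = (1 - (1-κ)^n) / κ := by
    rw [show (1:ℝ) - κ - 1 = -κ by ring, div_neg]
    ring
  rw [e, div_le_div_iff₀ hκpos hκpos]
  have h1 : (0:ℝ) ≤ (1-κ)^n := pow_nonneg (by linarith) n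
  nlinarith

end ConcAux

open ConcAux in
lemma upper_tail_aux {V : Type*} [Fintype V] (G : SimpleGraph V)
    (hG : G.Connected) (m : V → V → ℝ) (hm : IsRandomWalk G m)
    (ν : V → ℝ) (hν : IsProbVec ν)
    (herg : ∀ (g : V → ℝ) (x : V),
      Tendsto (fun i => (Mop m)^[i] g x) atTop (nhds (∑ y, ν y * g y)))
    (κ : ℝ) (hκpos : 0 < κ) (hκ : ∀ x y : V, x ≠ y → κ ≤ ricci G m x y)
    (f : V → ℝ) (hf : ∀ x y : V, G.Adj x y → |f x - f y| ≤ 1)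
    (t : ℝ) (ht : 1 ≤ t) :
    (∑ x ∈ Finset.univ.filter (fun x => f x - ∑ y, ν y * f y > t), ν x) ≤
      Real.exp (-t ^ 2 * κ / 7) := by
  by_cases hV : ∀ x y : V, x = y
  · have hempty : ∀ x : V, ¬ (f x - ∑ y, ν y * f y > t) := by
      intro x
      have e : ∑ y, ν y * f y = f x := by
        have e1 : ∀ y, ν y * f y = ν y * f x := fun y => by rw [hV y x]
        rw [Finset.sum_congr rfl fun y _ => e1 y, ← Finset.sum_mul, hν.2, one_mul]
      rw [e]
      simp only [sub_self, gt_iff_lt, not_lt]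
      linarith
    have hz : (∑ x ∈ Finset.univ.filter (fun x => f x - ∑ y, ν y * f y > t), ν x) = 0 :=
      Finset.sum_eq_zero fun x hx => absurd (Finset.mem_filter.mp hx).2 (hempty x)
    rw [hz]
    exact (Real.exp_pos _).le
  · push_neg at hV
    obtain ⟨x0, y0, hx0y0⟩ := hV
    have hfl : Lip G 1 f := lip_one G hG f hf
    have hκ1 : κ ≤ 1 := by
      have h1 := hκ x0 y0 hx0y0
      have hd : (0:ℝ) < (G.dist x0 y0 : ℝ) := by
        exact_mod_cast hG.pos_dist_of_ne hx0y0
      have hW0 : 0 ≤ Wdist G (m x0) (m y0) := Wdist_nonneg G _ _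
      have h2 : 0 ≤ Wdist G (m x0) (m y0) / (G.dist x0 y0 : ℝ) := div_nonneg hW0 hd.le
      simp only [ricci] at h1
      linarith
    have hW : ∀ x y : V, x ≠ y →
        Wdist G (m x) (m y) ≤ (1-κ) * (G.dist x y : ℝ) := by
      intro x y hxy
      have h1 := hκ x y hxy
      have hd : (0:ℝ) < (G.dist x y : ℝ) := by exact_mod_cast hG.pos_dist_of_ne hxy
      simp only [ricci] at h1
      have h2 : Wdist G (m x) (m y) / (G.dist x y : ℝ) ≤ 1 - κ := by linarith
      calc Wdist G (m x) (m y)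
          = Wdist G (m x) (m y) / (G.dist x y : ℝ) * (G.dist x y : ℝ) := by
            field_simp
        _ ≤ (1-κ) * (G.dist x y : ℝ) := mul_le_mul_of_nonneg_right h2 hd.le
    by_cases hcase : t * κ ≤ 1
    · -- MGF / Chernoff route
      set lam := t * κ / 2 with hlam_def
      have htpos : (0:ℝ) < t := by linarith
      have hlam : 0 ≤ lam := by positivity
      have h2lam : 2 * lam ≤ 1 := by rw [hlam_def]; linarith
      have hSle : ∀ n : ℕ, ∑ i ∈ Finset.range n, ((1-κ)^2)^i ≤ 1/κ := by
        intro n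
        refine le_trans (Finset.sum_le_sum fun i _ => ?_) (geom_le hκpos hκ1 n)
        exact pow_le_pow_left₀ (sq_nonneg _) (by nlinarith) i
      have hbound : ∀ n : ℕ, (Mop m)^[n] (fun z => Real.exp (lam * f z)) x0 ≤
          Real.exp (lam * (Mop m)^[n] f x0 + (13/18) * lam^2 * (1/κ)) := by
        intro n
        refine le_trans (iter_bound G hG hm hκpos hκ1 hW hfl hlam h2lam n x0) ?_
        apply Real.exp_le_exp.mpr
        have h1 : (13:ℝ)/18 * lam^2 * ∑ i ∈ Finset.range n, ((1-κ)^2)^i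
            ≤ (13/18) * lam^2 * (1/κ) := by
          have h0 : (0:ℝ) ≤ (13:ℝ)/18 * lam^2 := by positivity
          calc (13:ℝ)/18 * lam^2 * ∑ i ∈ Finset.range n, ((1-κ)^2)^i
              = (13:ℝ)/18 * lam^2 * ∑ i ∈ Finset.range n, ((1-κ)^2)^i := rfl
            _ ≤ (13:ℝ)/18 * lam^2 * (1/κ) := mul_le_mul_of_nonneg_left (hSle n) h0
        linarith
      have hmgf : ∑ y, ν y * Real.exp (lam * f y)
          ≤ Real.exp (lam * (∑ y, ν y * f y) + (13/18)*lam^2*(1/κ)) := by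
        have hA := herg (fun z => Real.exp (lam * f z)) x0
        have hB : Tendsto
            (fun n => Real.exp (lam * (Mop m)^[n] f x0 + (13/18)*lam^2*(1/κ)))
            atTop
            (nhds (Real.exp (lam * (∑ y, ν y * f y) + (13/18)*lam^2*(1/κ)))) := by
          have h1 := herg f x0
          have h2 := (h1.const_mul lam).add_const ((13:ℝ)/18*lam^2*(1/κ))
          exact (Real.continuous_exp.tendsto _).comp h2
        exact le_of_tendsto_of_tendsto' hA hB hbound
      calc (∑ x ∈ Finset.univ.filter (fun x => f x - ∑ y, ν y * f y > t), ν x)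
          ≤ ∑ x ∈ Finset.univ.filter (fun x => f x - ∑ y, ν y * f y > t),
              ν x * Real.exp (lam * (f x - (∑ y, ν y * f y) - t)) := by
            refine Finset.sum_le_sum fun x hx => ?_
            have hx' : f x - ∑ y, ν y * f y > t := (Finset.mem_filter.mp hx).2
            have h0 : 0 ≤ lam * (f x - (∑ y, ν y * f y) - t) :=
              mul_nonneg hlam (by linarith)
            exact le_mul_of_one_le_right (hν.1 x) (Real.one_le_exp h0)
        _ ≤ ∑ x, ν x * Real.exp (lam * (f x - (∑ y, ν y * f y) - t)) :=
            Finset.sum_le_sum_of_subset_of_nonneg (Finset.filter_subset _ _)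
              (fun x _ _ => mul_nonneg (hν.1 x) (Real.exp_pos _).le)
        _ = (∑ x, ν x * Real.exp (lam * f x))
            * Real.exp (-(lam * (∑ y, ν y * f y)) - lam * t) := by
            rw [Finset.sum_mul]
            refine Finset.sum_congr rfl fun x _ => ?_
            rw [mul_assoc, ← Real.exp_add]
            congr 2
            ring
        _ ≤ Real.exp (lam * (∑ y, ν y * f y) + (13/18)*lam^2*(1/κ))
            * Real.exp (-(lam * (∑ y, ν y * f y)) - lam * t) :=
            mul_le_mul_of_nonneg_right hmgf (Real.exp_pos _).le
        _ = Real.exp (-(lam*t) + (13/18)*lam^2*(1/κ)) := by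
            rw [← Real.exp_add]; congr 1; ring
        _ ≤ Real.exp (-t ^ 2 * κ / 7) := by
            apply Real.exp_le_exp.mpr
            rw [hlam_def]
            have h0 : 0 ≤ t^2*κ := by positivity
            have e : (13:ℝ)/18*(t*κ/2)^2*(1/κ) = 13/72*(t^2*κ) := by
              field_simp
              ring
            rw [e]
            ring_nf
            nlinarith [h0]
    · -- tail is empty
      push_neg at hcase
      have habs : ∀ (x : V) (n : ℕ), |f x - (Mop m)^[n] f x|
          ≤ ∑ i ∈ Finset.range n, (1-κ)^i := by
        intro x n
        induction n with
        | zero => simp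
        | succ n ih =>
          rw [Function.iterate_succ_apply']
          have h1 : |(Mop m)^[n] f x - Mop m ((Mop m)^[n] f) x| ≤ (1-κ)^n := by
            rw [abs_sub_comm]
            exact Mop_close G hm (pow_nonneg (by linarith) n)
              (iter_lip G hG hm hκ1 hW hfl n) x
          calc |f x - Mop m ((Mop m)^[n] f) x|
              ≤ |f x - (Mop m)^[n] f x| + |(Mop m)^[n] f x - Mop m ((Mop m)^[n] f) x| := by
                have := abs_sub_le (f x) ((Mop m)^[n] f x) (Mop m ((Mop m)^[n] f) x)
                linarith
            _ ≤ (∑ i ∈ Finset.range n, (1-κ)^i) + (1-κ)^n := add_le_add ih h1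
            _ = ∑ i ∈ Finset.range (n+1), (1-κ)^i := (Finset.sum_range_succ _ n).symm
      have hclose : ∀ x : V, f x - ∑ y, ν y * f y ≤ 1/κ := by
        intro x
        have hlim : Tendsto (fun n => f x - (Mop m)^[n] f x) atTop
            (nhds (f x - ∑ y, ν y * f y)) := tendsto_const_nhds.sub (herg f x)
        refine le_of_tendsto' hlim fun n => ?_
        have h1 := (abs_le.mp (habs x n)).2
        have h2 := ConcAux.geom_le hκpos hκ1 n
        linarith
      have hempty : ∀ x : V, ¬ (f x - ∑ y, ν y * f y > t) := by
        intro x hx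
        have h1 := hclose x
        have h2 : 1/κ < t := by
          rw [div_lt_iff₀ hκpos]
          linarith [mul_comm t κ]
        linarith
      have hz : (∑ x ∈ Finset.univ.filter (fun x => f x - ∑ y, ν y * f y > t), ν x) = 0 :=
        Finset.sum_eq_zero fun x hx => absurd (Finset.mem_filter.mp hx).2 (hempty x)
      rw [hz]
      exact (Real.exp_pos _).le

/-- main concentration theorem. Let `G` be a finite graph with an
ergodic random walk `m` with invariant distribution `ν` and Ricci curvature at least
`κ > 0`. Then for any 1-Lipschitz `f` and `t ≥ 1`, both tails `ν(f - E_ν f > t)`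
and `ν(f - E_ν f < -t)` are at most `exp(-t²κ/7)`. -/
theorem concentration_of_ricci {V : Type*} [Fintype V] (G : SimpleGraph V)
    (hG : G.Connected) (m : V → V → ℝ) (hm : IsRandomWalk G m)
    (ν : V → ℝ) (hν : IsProbVec ν) (hinv : ∀ y : V, ∑ x, ν x * m x y = ν y)
    (herg : ∀ (g : V → ℝ) (x : V),
      Tendsto (fun i => (Mop m)^[i] g x) atTop (nhds (∑ y, ν y * g y)))
    (κ : ℝ) (hκpos : 0 < κ) (hκ : ∀ x y : V, x ≠ y → κ ≤ ricci G m x y)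
    (f : V → ℝ) (hf : ∀ x y : V, G.Adj x y → |f x - f y| ≤ 1)
    (t : ℝ) (ht : 1 ≤ t) :
    (∑ x ∈ Finset.univ.filter (fun x => f x - ∑ y, ν y * f y > t), ν x) ≤
        Real.exp (-t ^ 2 * κ / 7) ∧
      (∑ x ∈ Finset.univ.filter (fun x => f x - ∑ y, ν y * f y < -t), ν x) ≤
        Real.exp (-t ^ 2 * κ / 7) := by
  constructor
  · exact upper_tail_aux G hG m hm ν hν herg κ hκpos hκ f hf t ht
  · have hf' : ∀ x y : V, G.Adj x y → |(fun z => -f z) x - (fun z => -f z) y| ≤ 1 := by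
      intro x y h
      have := hf x y h
      simp only []
      rw [show -f x - -f y = -(f x - f y) by ring, abs_neg]
      exact this
    have h2 := upper_tail_aux G hG m hm ν hν herg κ hκpos hκ (fun z => -f z) hf' t ht
    have hsum : ∑ y, ν y * -f y = -∑ y, ν y * f y := by
      simp [mul_neg]
    have hset : (Finset.univ.filter (fun x => f x - ∑ y, ν y * f y < -t))
        = (Finset.univ.filter (fun x => -f x - ∑ y, ν y * -f y > t)) := by
      refine Finset.filter_congr fun x _ => ?_
      rw [hsum]
      constructor <;> intro h <;> simp only [gt_iff_lt] at * <;> linarith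
    rw [hset]
    exact h2
end

section
/- Let G be a graph with Ricci curvature at least κ > 0 equipped with a random walk m with averaging operator M. Then for every 1-Lipschitz function f, every λ > 0, and every i ≥ 1, M^i(e^{λf}) ≤ exp(λ·M^i f + (1/2)·λ²·e^{2λ}·Σ_{j=0}^{i-1} (1-κ)^{2j}) pointwise. -/
/-!
A lower bound `κ` on the Ricci curvature makes the averaging operator `M` contract Lipschitz
constants by `1 - κ`: for any coupling of `m_x` and `m_y`, `Mφ x - Mφ y` is the transport cost of
the differences of `φ`, so it is at most `α · W(m_x, m_y) ≤ α (1 - κ) d(x, y)`. Hence `M^j f` is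
`(1 - κ)^j`-Lipschitz.

If `φ` is `α`-Lipschitz with `α ≤ 1`, then on the support of `m_x` it stays within `α` of `φ x`,
so it deviates from its mean `Mφ x` by at most `2α ≤ 2` and has variance at most `α²`; the Taylor
bound `e^t ≤ 1 + t + t² e^{|t|} / 2` then gives `M e^{λφ} ≤ exp (λ Mφ + λ² e^{2λ} α² / 2)`.
Writing `M^{n+1} e^{λf} = M (M^n e^{λf})` and applying this to `φ = M^n f` inductively adds the
terms `(1 - κ)^{2n}` one at a time.
-/

open Finset

open Real

theorem Real.exp_le_one_add_add_sq_mul_exp_abs (t : ℝ) :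
    exp t ≤ 1 + t + t ^ 2 / 2 * exp |t| := by
  rcases eq_or_ne 0 t with rfl | ht
  · simp
  obtain ⟨ξ, hξ, h⟩ := taylor_mean_remainder_lagrange_iteratedDeriv (f := exp) (n := 1) ht
    contDiff_exp.contDiffOn
  have hderiv : derivWithin exp (Set.uIcc 0 t) 0 = 1 := by
    simpa using (hasDerivAt_exp 0).hasDerivWithinAt.derivWithin
      (uniqueDiffOn_uIcc ht 0 Set.left_mem_uIcc)
  have hξt : exp ξ ≤ exp |t| :=
    exp_le_exp.2 <| hξ.2.le.trans <| max_le (abs_nonneg t) (le_abs_self t)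
  simp only [taylorWithinEval_succ, taylor_within_zero_eval, iteratedDeriv_succ,
    iteratedDeriv_zero, deriv_exp] at h
  norm_num [hderiv] at h
  nlinarith [sq_nonneg t]

def SimpleGraph.IsLipschitz {V : Type*} (G : SimpleGraph V) (α : ℝ) (φ : V → ℝ) : Prop :=
  ∀ x y, |φ x - φ y| ≤ α * G.dist x y

theorem SimpleGraph.IsLipschitz.mono {V : Type*} {G : SimpleGraph V} {α β : ℝ} {φ : V → ℝ}
    (hφ : G.IsLipschitz α φ) (hαβ : α ≤ β) : G.IsLipschitz β φ :=
  fun x y => (hφ x y).trans (by gcongr)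

namespace IsProbVec

variable {V : Type*} [Fintype V] {p q : V → ℝ}

theorem sum_const_mul_s9 (hp : IsProbVec p) (c : ℝ) : ∑ y, c * p y = c := by
  rw [← mul_sum, hp.2, mul_one]

theorem sum_mul_le_sum_mul_s9 (hp : IsProbVec p) {g h : V → ℝ} (hgh : ∀ y, p y ≠ 0 → g y ≤ h y) :
    ∑ y, g y * p y ≤ ∑ y, h y * p y := by
  refine sum_le_sum fun y _ => ?_
  rcases eq_or_ne (p y) 0 with hy | hy
  · simp [hy]
  · exact mul_le_mul_of_nonneg_right (hgh y hy) (hp.1 y)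

theorem sum_mul_le_of_le (hp : IsProbVec p) {g : V → ℝ} {a : ℝ} (hg : ∀ y, p y ≠ 0 → g y ≤ a) :
    ∑ y, g y * p y ≤ a :=
  (hp.sum_mul_le_sum_mul_s9 hg).trans_eq (hp.sum_const_mul_s9 a)

theorem sum_sub_mean_mul (hp : IsProbVec p) (φ : V → ℝ) :
    ∑ y, (φ y - ∑ z, φ z * p z) * p y = 0 := by
  simp only [sub_mul, sum_sub_distrib, hp.sum_const_mul_s9, sub_self]

theorem abs_mean_sub_le (hp : IsProbVec p) {φ : V → ℝ} {c α : ℝ}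
    (hφ : ∀ y, p y ≠ 0 → |φ y - c| ≤ α) : |∑ y, φ y * p y - c| ≤ α := by
  have hcenter : ∑ y, φ y * p y - c = ∑ y, (φ y - c) * p y := by
    simp only [sub_mul, sum_sub_distrib, hp.sum_const_mul_s9]
  calc |∑ y, φ y * p y - c| ≤ ∑ y, |φ y - c| * p y := by
        rw [hcenter]
        refine (abs_sum_le_sum_abs _ _).trans_eq (sum_congr rfl fun y _ => ?_)
        rw [abs_mul, abs_of_nonneg (hp.1 y)]
    _ ≤ α := hp.sum_mul_le_of_le hφ

theorem sum_sq_sub_mean_mul_le_s9 (hp : IsProbVec p) {φ : V → ℝ} {c α : ℝ}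
    (hφ : ∀ y, p y ≠ 0 → |φ y - c| ≤ α) :
    ∑ y, (φ y - ∑ z, φ z * p z) ^ 2 * p y ≤ α ^ 2 := by
  set μ := ∑ z, φ z * p z
  have hsplit : ∑ y, (φ y - c) ^ 2 * p y = ∑ y, (φ y - μ) ^ 2 * p y + (μ - c) ^ 2 := by
    calc ∑ y, (φ y - c) ^ 2 * p y = ∑ y, ((φ y - μ) ^ 2 * p y
          + 2 * (μ - c) * ((φ y - μ) * p y) + (μ - c) ^ 2 * p y) :=
          sum_congr rfl fun y _ => by ring
      _ = _ := by
          rw [sum_add_distrib, sum_add_distrib, ← mul_sum, hp.sum_sub_mean_mul, hp.sum_const_mul_s9]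
          ring
  have hdev : ∑ y, (φ y - c) ^ 2 * p y ≤ α ^ 2 :=
    hp.sum_mul_le_of_le fun y hy => sq_le_sq' (abs_le.1 (hφ y hy)).1 (abs_le.1 (hφ y hy)).2
  nlinarith [sq_nonneg (μ - c)]

theorem sum_exp_mul_le_of_sum_mul_eq_zero (hp : IsProbVec p) {ψ : V → ℝ} {b : ℝ}
    (hψ : ∑ y, ψ y * p y = 0) (hψb : ∀ y, p y ≠ 0 → |ψ y| ≤ b) :
    ∑ y, exp (ψ y) * p y ≤ exp (exp b / 2 * ∑ y, ψ y ^ 2 * p y) := by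
  calc ∑ y, exp (ψ y) * p y ≤ ∑ y, (1 + ψ y + exp b / 2 * ψ y ^ 2) * p y := by
        refine hp.sum_mul_le_sum_mul_s9 fun y hy => ?_
        have := exp_le_one_add_add_sq_mul_exp_abs (ψ y)
        have := exp_le_exp.2 (hψb y hy)
        nlinarith [sq_nonneg (ψ y)]
    _ = 1 + exp b / 2 * ∑ y, ψ y ^ 2 * p y := by
        simp only [add_mul, sum_add_distrib, hp.sum_const_mul_s9, hψ, mul_assoc, ← mul_sum]
        ring
    _ ≤ _ := by linarith [add_one_le_exp (exp b / 2 * ∑ y, ψ y ^ 2 * p y)]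

theorem sum_exp_mul_le_s9 (hp : IsProbVec p) {φ : V → ℝ} {c α l : ℝ} (hα : α ≤ 1)
    (hφ : ∀ y, p y ≠ 0 → |φ y - c| ≤ α) (hl : 0 ≤ l) :
    ∑ y, exp (l * φ y) * p y ≤
      exp (l * ∑ y, φ y * p y + 1 / 2 * l ^ 2 * exp (2 * l) * α ^ 2) := by
  set μ := ∑ y, φ y * p y
  have hcentered : ∑ y, l * (φ y - μ) * p y = 0 := by
    simp only [mul_assoc, ← mul_sum]
    exact mul_eq_zero_of_right l (hp.sum_sub_mean_mul φ)
  have hdev : ∀ y, p y ≠ 0 → |l * (φ y - μ)| ≤ 2 * l := fun y hy => by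
    have := abs_sub_le (φ y) c μ
    have := hφ y hy
    have := abs_sub_comm μ c ▸ hp.abs_mean_sub_le hφ
    rw [abs_mul, abs_of_nonneg hl]
    nlinarith
  have hvar : ∑ y, (l * (φ y - μ)) ^ 2 * p y ≤ l ^ 2 * α ^ 2 := by
    simp only [mul_pow, mul_assoc, ← mul_sum]
    exact mul_le_mul_of_nonneg_left (hp.sum_sq_sub_mean_mul_le_s9 hφ) (sq_nonneg l)
  calc ∑ y, exp (l * φ y) * p y = exp (l * μ) * ∑ y, exp (l * (φ y - μ)) * p y := by
        rw [mul_sum]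
        exact sum_congr rfl fun y _ => by rw [← mul_assoc, ← exp_add]; ring_nf
    _ ≤ exp (l * μ) * exp (exp (2 * l) / 2 * ∑ y, (l * (φ y - μ)) ^ 2 * p y) := by
        gcongr
        exact hp.sum_exp_mul_le_of_sum_mul_eq_zero hcentered hdev
    _ ≤ exp (l * μ) * exp (1 / 2 * l ^ 2 * exp (2 * l) * α ^ 2) := by
        refine mul_le_mul_of_nonneg_left (exp_le_exp.2 ?_) (exp_pos _).le
        nlinarith [exp_pos (2 * l)]
    _ = _ := (exp_add _ _).symm

theorem isCoupling_mul_s9 (hp : IsProbVec p) (hq : IsProbVec q) :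
    IsCoupling p q fun u v => p u * q v :=
  ⟨fun u v => mul_nonneg (hp.1 u) (hq.1 v), fun u => by rw [← mul_sum, hq.2, mul_one],
    fun v => by rw [← sum_mul, hp.2, one_mul]⟩

end IsProbVec

section Transport

variable {V : Type*} [Fintype V] {G : SimpleGraph V} {p q : V → ℝ} {α : ℝ} {φ : V → ℝ}

theorem IsCoupling.sum_mul_sub_sum_mul_le {A : V → V → ℝ} (hA : IsCoupling p q A)
    (hφ : G.IsLipschitz α φ) :
    ∑ u, φ u * p u - ∑ v, φ v * q v ≤ α * ∑ u, ∑ v, A u v * G.dist u v := by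
  obtain ⟨hA0, hA1, hA2⟩ := hA
  have hcost : ∑ u, φ u * p u - ∑ v, φ v * q v = ∑ u, ∑ v, A u v * (φ u - φ v) := by
    simp only [← hA1, ← hA2, mul_sum, mul_sub, sum_sub_distrib]
    rw [sum_comm (f := fun v u => φ v * A u v)]
    simp only [mul_comm]
  rw [hcost, mul_sum]
  refine sum_le_sum fun u _ => ?_
  rw [mul_sum]
  refine sum_le_sum fun v _ => ?_
  calc A u v * (φ u - φ v) ≤ A u v * (α * G.dist u v) :=
        mul_le_mul_of_nonneg_left ((le_abs_self _).trans (hφ u v)) (hA0 u v)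
    _ = α * (A u v * G.dist u v) := by ring

open scoped Pointwise in
theorem sum_mul_sub_sum_mul_le_mul_Wdist (hp : IsProbVec p) (hq : IsProbVec q) (hα : 0 ≤ α)
    (hφ : G.IsLipschitz α φ) :
    ∑ u, φ u * p u - ∑ v, φ v * q v ≤ α * Wdist G p q := by
  rw [Wdist, ← smul_eq_mul, ← Real.sInf_smul_of_nonneg hα]
  refine le_csInf (Set.Nonempty.smul_set ⟨_, _, hp.isCoupling_mul_s9 hq, rfl⟩) ?_
  rintro _ ⟨_, ⟨A, hA, rfl⟩, rfl⟩
  exact hA.sum_mul_sub_sum_mul_le hφ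

end Transport

namespace IsRandomWalk

variable {V : Type*} [Fintype V] {G : SimpleGraph V} {m : V → V → ℝ}

theorem reachable_of_ne_zero (hm : IsRandomWalk G m) {x y : V} (h : m x y ≠ 0) :
    G.Reachable x y := by
  rcases (hm x).2 y h with rfl | hadj
  · rfl
  · exact hadj.reachable

theorem Wdist_nonpos_of_not_reachable (hm : IsRandomWalk G m) {x y : V}
    (hxy : ¬ G.Reachable x y) : Wdist G (m x) (m y) ≤ 0 := by
  rw [Wdist]
  refine csInf_le_of_le ⟨0, ?_⟩ ⟨_, (hm x).1.isCoupling_mul_s9 (hm y).1, rfl⟩ (le_of_eq ?_)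
  · rintro _ ⟨A, ⟨hA0, -, -⟩, rfl⟩
    exact sum_nonneg fun u _ => sum_nonneg fun v _ => mul_nonneg (hA0 u v) (Nat.cast_nonneg _)
  · refine sum_eq_zero fun u _ => sum_eq_zero fun v _ => ?_
    by_cases hu : m x u = 0
    · simp [hu]
    by_cases hv : m y v = 0
    · simp [hv]
    have huv : ¬ G.Reachable u v := fun huv =>
      hxy ((hm.reachable_of_ne_zero hu).trans (huv.trans (hm.reachable_of_ne_zero hv).symm))
    simp [SimpleGraph.dist_eq_zero_of_not_reachable huv]

theorem Wdist_le_of_le_ricci (hm : IsRandomWalk G m) {κ : ℝ} {x y : V} (hne : x ≠ y)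
    (hκ : κ ≤ ricci G m x y) : Wdist G (m x) (m y) ≤ (1 - κ) * G.dist x y := by
  by_cases hxy : G.Reachable x y
  · have hd : (0 : ℝ) < G.dist x y := by exact_mod_cast hxy.pos_dist_of_ne hne
    rw [ricci] at hκ
    rw [← div_le_iff₀ hd]
    linarith
  · simpa [SimpleGraph.dist_eq_zero_of_not_reachable hxy] using
      hm.Wdist_nonpos_of_not_reachable hxy

theorem isLipschitz_Mop (hm : IsRandomWalk G m) {κ : ℝ}
    (hκ : ∀ x y : V, x ≠ y → κ ≤ ricci G m x y) {α : ℝ} (hα : 0 ≤ α) {φ : V → ℝ}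
    (hφ : G.IsLipschitz α φ) : G.IsLipschitz (α * (1 - κ)) (Mop m φ) := by
  have hsub : ∀ x y, Mop m φ x - Mop m φ y ≤ α * (1 - κ) * G.dist x y := by
    intro x y
    rcases eq_or_ne x y with rfl | hne
    · simp
    calc Mop m φ x - Mop m φ y ≤ α * Wdist G (m x) (m y) :=
          sum_mul_sub_sum_mul_le_mul_Wdist (hm x).1 (hm y).1 hα hφ
      _ ≤ α * ((1 - κ) * G.dist x y) := by
          gcongr
          exact hm.Wdist_le_of_le_ricci hne (hκ x y hne)
      _ = α * (1 - κ) * G.dist x y := (mul_assoc _ _ _).symm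
  intro x y
  rw [abs_sub_le_iff]
  exact ⟨hsub x y, by simpa only [G.dist_comm] using hsub y x⟩

-- `κ` may exceed `1`, and only a nonnegative Lipschitz constant can be pushed through `M` again.
theorem isLipschitz_iterate_Mop (hm : IsRandomWalk G m) {κ : ℝ}
    (hκ : ∀ x y : V, x ≠ y → κ ≤ ricci G m x y) {f : V → ℝ} (hf : G.IsLipschitz 1 f) (n : ℕ) :
    G.IsLipschitz (max (1 - κ) 0 ^ n) ((Mop m)^[n] f) := by
  induction n with
  | zero => simpa using hf
  | succ n ih =>
    rw [Function.iterate_succ_apply', pow_succ]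
    exact (hm.isLipschitz_Mop hκ (by positivity) ih).mono (by gcongr; exact le_max_left _ _)

theorem Mop_mono (hm : IsRandomWalk G m) {g h : V → ℝ} (hgh : ∀ y, g y ≤ h y) (x : V) :
    Mop m g x ≤ Mop m h x :=
  (hm x).1.sum_mul_le_sum_mul_s9 fun y _ => hgh y

theorem Mop_exp_le (hm : IsRandomWalk G m) {α : ℝ} (hα0 : 0 ≤ α) (hα1 : α ≤ 1) {φ : V → ℝ}
    (hφ : G.IsLipschitz α φ) {l : ℝ} (hl : 0 ≤ l) (x : V) :
    Mop m (fun y => exp (l * φ y)) x ≤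
      exp (l * Mop m φ x + 1 / 2 * l ^ 2 * exp (2 * l) * α ^ 2) := by
  refine (hm x).1.sum_exp_mul_le_s9 (c := φ x) hα1 (fun y hy => ?_) hl
  rcases (hm x).2 y hy with rfl | hadj
  · simpa using hα0
  · simpa [SimpleGraph.dist_eq_one_iff_adj.2 hadj.symm] using hφ y x

theorem iterate_Mop_exp_le (hm : IsRandomWalk G m) {α : ℕ → ℝ} (hα0 : ∀ j, 0 ≤ α j)
    (hα1 : ∀ j, α j ≤ 1) {f : V → ℝ} (hf : ∀ j, G.IsLipschitz (α j) ((Mop m)^[j] f))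
    {l : ℝ} (hl : 0 ≤ l) (n : ℕ) (x : V) :
    (Mop m)^[n] (fun y => exp (l * f y)) x ≤
      exp (l * (Mop m)^[n] f x + 1 / 2 * l ^ 2 * exp (2 * l) * ∑ j ∈ range n, α j ^ 2) := by
  induction n generalizing x with
  | zero => simp
  | succ n ih =>
    set C := 1 / 2 * l ^ 2 * exp (2 * l)
    set S := ∑ j ∈ range n, α j ^ 2
    rw [Function.iterate_succ_apply', Function.iterate_succ_apply', sum_range_succ]
    calc Mop m ((Mop m)^[n] fun y => exp (l * f y)) x
        ≤ Mop m (fun y => exp (C * S) * exp (l * (Mop m)^[n] f y)) x :=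
          hm.Mop_mono (fun y => (ih y).trans_eq (by rw [← exp_add, add_comm])) x
      _ = exp (C * S) * Mop m (fun y => exp (l * (Mop m)^[n] f y)) x := by
          simp only [Mop, mul_sum, mul_assoc]
      _ ≤ exp (C * S) * exp (l * Mop m ((Mop m)^[n] f) x + C * α n ^ 2) := by
          gcongr
          exact hm.Mop_exp_le (hα0 n) (hα1 n) (hf n) hl x
      _ = exp (l * Mop m ((Mop m)^[n] f) x + C * (S + α n ^ 2)) := by
          rw [← exp_add]
          ring_nf

end IsRandomWalk

theorem iterated_averaging_exp_bound_general {V : Type*} [Fintype V] (G : SimpleGraph V)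
    (m : V → V → ℝ) (hm : IsRandomWalk G m)
    (κ : ℝ) (hκpos : 0 < κ) (hκ : ∀ x y : V, x ≠ y → κ ≤ ricci G m x y)
    (f : V → ℝ) (hf : ∀ x y : V, |f x - f y| ≤ (G.dist x y : ℝ))
    (l : ℝ) (hl : 0 < l) (i : ℕ) :
    ∀ x : V, (Mop m)^[i] (fun y => Real.exp (l * f y)) x ≤
      Real.exp (l * (Mop m)^[i] f x +
        (1 / 2) * l ^ 2 * Real.exp (2 * l) * ∑ j ∈ Finset.range i, (1 - κ) ^ (2 * j)) := by
  intro x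
  set c := max (1 - κ) 0
  have hc0 : 0 ≤ c := le_max_right _ _
  have hc1 : c ≤ 1 := max_le (by linarith) zero_le_one
  have hf1 : G.IsLipschitz 1 f := fun x y => by simpa using hf x y
  refine (hm.iterate_Mop_exp_le (α := (c ^ ·)) (pow_nonneg hc0) (fun j => pow_le_one₀ hc0 hc1)
    (hm.isLipschitz_iterate_Mop hκ hf1) hl.le i x).trans ?_
  gcongr with j
  have hsq : c ^ 2 ≤ (1 - κ) ^ 2 := by
    rcases le_total (1 - κ) 0 with h | h <;> simp [c, h, sq_nonneg]
  calc (c ^ j) ^ 2 = (c ^ 2) ^ j := by ring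
    _ ≤ ((1 - κ) ^ 2) ^ j := by gcongr
    _ = (1 - κ) ^ (2 * j) := (pow_mul _ _ _).symm

/-- iterated exponential moment bound. If `G` has Ricci curvature
at least `κ > 0`, then for every 1-Lipschitz `f`, every `λ > 0` and every `i ≥ 1`,
`M^i(e^{λf}) ≤ exp(λ·M^i f + (1/2)λ²e^{2λ}·∑_{j<i}(1-κ)^{2j})` pointwise. -/
theorem iterated_averaging_exp_bound {V : Type*} [Fintype V] (G : SimpleGraph V)
    (m : V → V → ℝ) (hm : IsRandomWalk G m)
    (κ : ℝ) (hκpos : 0 < κ) (hκ : ∀ x y : V, x ≠ y → κ ≤ ricci G m x y)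
    (f : V → ℝ) (hf : ∀ x y : V, |f x - f y| ≤ (G.dist x y : ℝ))
    (l : ℝ) (hl : 0 < l) (i : ℕ) (hi : 1 ≤ i) :
    ∀ x : V, (Mop m)^[i] (fun y => Real.exp (l * f y)) x ≤
      Real.exp (l * (Mop m)^[i] f x +
        (1 / 2) * l ^ 2 * Real.exp (2 * l) * ∑ j ∈ Finset.range i, (1 - κ) ^ (2 * j)) :=
  iterated_averaging_exp_bound_general G m hm κ hκpos hκ f hf l hl i
end

section
/- Let G be a finite graph with ergodic random walk m, invariant distribution ν, and Ricci curvature at least κ > 0. Then for any 1-Lipschitz function f and any λ > 0 with λ ≤ λ₀ where λ₀ solves x·e^{2x} = 2(2-κ), the exponential moment bound E_ν[e^{λf}] ≤ exp(λ·E_ν[f] + λ²e^{2λ}/(2κ(2-κ))) holds. -/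
open Finset Filter

/-! ### Auxiliary elementary inequalities -/

lemma aux_exp_neg {u : ℝ} (hu : u ≤ 0) : Real.exp u ≤ 1 + u + u^2/2 := by
  have h : AntitoneOn (fun x : ℝ => 1 + x + x^2/2 - Real.exp x) (Set.Iic 0) := by
    apply antitoneOn_of_deriv_nonpos (convex_Iic 0)
    · fun_prop
    · fun_prop
    · intro x hx
      have hd : HasDerivAt (fun x : ℝ => 1 + x + x^2/2 - Real.exp x)
          (0 + 1 + (2 * x^1 * 1)/2 - Real.exp x) x := by
        exact ((((hasDerivAt_const x (1:ℝ)).add (hasDerivAt_id x)).add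
          (((hasDerivAt_id x).pow 2).div_const 2)).sub (Real.hasDerivAt_exp x))
      rw [hd.deriv]
      have := Real.add_one_le_exp x
      simp only [pow_one]
      nlinarith
  have h0 := h (Set.mem_Iic.mpr hu) (Set.mem_Iic.mpr le_rfl) hu
  simp only [Real.exp_zero] at h0
  nlinarith

lemma aux_exp_pos {u : ℝ} (hu : 0 ≤ u) : Real.exp u ≤ 1 + u + u^2/2 * Real.exp u := by
  have h : MonotoneOn (fun x : ℝ => (1 + x) * Real.exp (-x) - 1 + x^2/2) (Set.Ici 0) := by
    apply monotoneOn_of_deriv_nonneg (convex_Ici 0)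
    · fun_prop
    · fun_prop
    · intro x hx
      have hd : HasDerivAt (fun x : ℝ => (1 + x) * Real.exp (-x) - 1 + x^2/2)
          (((0 + 1) * Real.exp (-x) + (1 + x) * (Real.exp (-x) * (-1)) - 0) + (2 * x^1 * 1)/2) x := by
        exact ((((hasDerivAt_const x (1:ℝ)).add (hasDerivAt_id x)).mul
          ((Real.hasDerivAt_exp (-x)).comp x ((hasDerivAt_id x).neg))).sub
            (hasDerivAt_const x (1:ℝ))).add (((hasDerivAt_id x).pow 2).div_const 2)
      rw [hd.deriv]
      rw [interior_Ici] at hx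
      have hx0 : (0:ℝ) ≤ x := le_of_lt hx
      have h1 : Real.exp (-x) ≤ 1 := by
        rw [Real.exp_le_one_iff]; linarith
      have h2 : (0:ℝ) < Real.exp (-x) := Real.exp_pos _
      simp only [pow_one]
      nlinarith
  have h0 := h (Set.mem_Ici.mpr le_rfl) (Set.mem_Ici.mpr hu) hu
  simp only [neg_zero, Real.exp_zero] at h0
  have h2 : (0:ℝ) < Real.exp u := Real.exp_pos _
  have h3 : Real.exp (-u) * Real.exp u = 1 := by
    rw [← Real.exp_add]; simp
  nlinarith

lemma aux_exp_le {u a : ℝ} (h : |u| ≤ a) : Real.exp u ≤ 1 + u + u^2/2 * Real.exp a := by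
  have ha : Real.exp u ≤ Real.exp a := Real.exp_le_exp.mpr ((le_abs_self u).trans h)
  have ha1 : (1:ℝ) ≤ Real.exp a := by
    rw [Real.one_le_exp_iff]
    exact (abs_nonneg u).trans h
  rcases le_or_gt u 0 with hu | hu
  · have := aux_exp_neg hu
    nlinarith
  · have := aux_exp_pos hu.le
    nlinarith

/-! ### Lipschitz and contraction lemmas -/

set_option linter.unusedSectionVars false
section graph

variable {V : Type*} [Fintype V] {G : SimpleGraph V} {m : V → V → ℝ}

lemma lip_of_walk (g : V → ℝ) (c : ℝ)
    (hadj : ∀ x y, G.Adj x y → |g x - g y| ≤ c) :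
    ∀ {x y : V} (p : G.Walk x y), |g x - g y| ≤ c * p.length := by
  intro x y p
  induction p with
  | nil => simp
  | @cons a b d h p ih =>
    have h1 : |g a - g b| ≤ c := hadj a b h
    have h2 : |g a - g d| ≤ |g a - g b| + |g b - g d| := abs_sub_le _ _ _
    simp only [SimpleGraph.Walk.length_cons]
    push_cast
    linarith

lemma lip_of_dist (hG : G.Connected) (g : V → ℝ) (c : ℝ)
    (hadj : ∀ x y, G.Adj x y → |g x - g y| ≤ c) (x y : V) :
    |g x - g y| ≤ c * G.dist x y := by
  obtain ⟨p, hp⟩ := hG.exists_walk_length_eq_dist x y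
  rw [← hp]
  exact lip_of_walk g c hadj p

lemma mop_sub_le (hm : IsRandomWalk G m) {g : V → ℝ} {c : ℝ} (hc : 0 < c)
    (hg : ∀ x y, |g x - g y| ≤ c * G.dist x y) (x y : V) :
    Mop m g x - Mop m g y ≤ c * Wdist G (m x) (m y) := by
  rw [← div_le_iff₀' hc]
  apply le_csInf
  · exact ⟨∑ u, ∑ v, (m x u * m y v) * (G.dist u v : ℝ),
      fun u v => m x u * m y v,
      ⟨fun u v => mul_nonneg ((hm x).1.1 u) ((hm y).1.1 v),
       fun u => by rw [← Finset.mul_sum, (hm y).1.2, mul_one],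
       fun v => by rw [← Finset.sum_mul, (hm x).1.2, one_mul]⟩, rfl⟩
  · rintro s ⟨A, ⟨hA0, hA1, hA2⟩, rfl⟩
    rw [div_le_iff₀' hc]
    have e1 : Mop m g x = ∑ u, ∑ v, g u * A u v := by
      simp only [Mop]
      exact Finset.sum_congr rfl fun u _ => by rw [← hA1 u, Finset.mul_sum]
    have e2 : Mop m g y = ∑ u, ∑ v, g v * A u v := by
      simp only [Mop]
      rw [Finset.sum_congr rfl fun v (_ : v ∈ Finset.univ) =>
        (by rw [← hA2 v, Finset.mul_sum] : g v * m y v = ∑ u, g v * A u v), Finset.sum_comm]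
    rw [e1, e2, ← Finset.sum_sub_distrib, Finset.mul_sum]
    apply Finset.sum_le_sum
    intro u _
    rw [← Finset.sum_sub_distrib, Finset.mul_sum]
    apply Finset.sum_le_sum
    intro v _
    have h3 : g u * A u v - g v * A u v = (g u - g v) * A u v := by ring
    rw [h3]
    calc (g u - g v) * A u v ≤ (c * G.dist u v) * A u v :=
          mul_le_mul_of_nonneg_right ((le_abs_self _).trans (hg u v)) (hA0 u v)
      _ = c * (A u v * G.dist u v) := by ring

lemma wdist_le (hG : G.Connected) {κ : ℝ}
    (hκ : ∀ x y : V, x ≠ y → κ ≤ ricci G m x y) {x y : V} (hxy : x ≠ y) :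
    Wdist G (m x) (m y) ≤ |1 - κ| * G.dist x y := by
  have hd : (0:ℝ) < (G.dist x y : ℝ) := by
    exact_mod_cast hG.pos_dist_of_ne hxy
  have h1 := hκ x y hxy
  rw [ricci] at h1
  have h2 : Wdist G (m x) (m y) / (G.dist x y : ℝ) ≤ 1 - κ := by linarith
  rw [div_le_iff₀ hd] at h2
  calc Wdist G (m x) (m y) ≤ (1 - κ) * G.dist x y := h2
    _ ≤ |1 - κ| * G.dist x y := mul_le_mul_of_nonneg_right (le_abs_self _) hd.le

lemma lip_mop (hG : G.Connected) (hm : IsRandomWalk G m) {κ : ℝ}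
    (hκ : ∀ x y : V, x ≠ y → κ ≤ ricci G m x y) {g : V → ℝ} {c : ℝ} (hc : 0 ≤ c)
    (hg : ∀ x y, |g x - g y| ≤ c * G.dist x y) (x y : V) :
    |Mop m g x - Mop m g y| ≤ (|1 - κ| * c) * G.dist x y := by
  rcases eq_or_ne x y with rfl | hxy
  · simp only [sub_self, abs_zero, SimpleGraph.dist_self, Nat.cast_zero, mul_zero]
    positivity
  rcases hc.eq_or_lt with rfl | hc
  · have hgc : ∀ u v : V, g u = g v := by
      intro u v
      have h := hg u v
      rw [zero_mul] at h
      have := abs_nonneg (g u - g v)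
      have : |g u - g v| = 0 := le_antisymm h this
      have := abs_eq_zero.mp this
      linarith
    have hMx : ∀ z : V, Mop m g z = g x := by
      intro z
      simp only [Mop]
      calc ∑ v, g v * m z v = ∑ v, g x * m z v :=
            Finset.sum_congr rfl fun v _ => by rw [hgc v x]
        _ = g x := by rw [← Finset.mul_sum, (hm z).1.2, mul_one]
    rw [hMx x, hMx y, sub_self, abs_zero]
    positivity
  · rw [abs_sub_le_iff]
    constructor
    · calc Mop m g x - Mop m g y ≤ c * Wdist G (m x) (m y) := mop_sub_le hm hc hg x y
        _ ≤ c * (|1 - κ| * G.dist x y) :=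
            mul_le_mul_of_nonneg_left (wdist_le hG hκ hxy) hc.le
        _ = (|1 - κ| * c) * G.dist x y := by ring
    · have hd : G.dist y x = G.dist x y := SimpleGraph.dist_comm
      calc Mop m g y - Mop m g x ≤ c * Wdist G (m y) (m x) := mop_sub_le hm hc hg y x
        _ ≤ c * (|1 - κ| * G.dist y x) :=
            mul_le_mul_of_nonneg_left (wdist_le hG hκ hxy.symm) hc.le
        _ = (|1 - κ| * c) * G.dist x y := by rw [hd]; ring

lemma lip_iter (hG : G.Connected) (hm : IsRandomWalk G m) {κ : ℝ}
    (hκ : ∀ x y : V, x ≠ y → κ ≤ ricci G m x y)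
    {f : V → ℝ} (hf : ∀ x y : V, G.Adj x y → |f x - f y| ≤ 1) (i : ℕ) :
    ∀ x y : V, |(Mop m)^[i] f x - (Mop m)^[i] f y| ≤ |1 - κ| ^ i * G.dist x y := by
  induction i with
  | zero =>
    intro x y
    simpa using lip_of_dist hG f 1 hf x y
  | succ i ih =>
    intro x y
    rw [Function.iterate_succ_apply']
    have h := lip_mop hG hm hκ (pow_nonneg (abs_nonneg (1 - κ)) i) ih x y
    calc |Mop m ((Mop m)^[i] f) x - Mop m ((Mop m)^[i] f) y|
        ≤ (|1 - κ| * |1 - κ| ^ i) * G.dist x y := h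
      _ = |1 - κ| ^ (i + 1) * G.dist x y := by rw [pow_succ]; ring

lemma mop_exp_le (hm : IsRandomWalk G m) {g : V → ℝ} {c l : ℝ} (x : V)
    (hl : 0 < l) (hc : 0 ≤ c) (hc2 : c ≤ 2)
    (hg : ∀ y, m x y ≠ 0 → |g y - g x| ≤ c) :
    Mop m (fun y => Real.exp (l * g y)) x ≤
      Real.exp (l * Mop m g x + l ^ 2 * c ^ 2 / 2 * Real.exp (2 * l)) := by
  set K := l ^ 2 * c ^ 2 / 2 * Real.exp (2 * l) with hK
  have step : ∀ y, Real.exp (l * g y) * m x y ≤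
      (Real.exp (l * g x) * (1 + l * (g y - g x) + K)) * m x y := by
    intro y
    rcases eq_or_ne (m x y) 0 with h0 | h0
    · rw [h0]; simp
    · apply mul_le_mul_of_nonneg_right _ ((hm x).1.1 y)
      have hgy := hg y h0
      have habs : |l * (g y - g x)| ≤ l * c := by
        rw [abs_mul, abs_of_pos hl]
        exact mul_le_mul_of_nonneg_left hgy hl.le
      have hu : |l * (g y - g x)| ≤ 2 * l := habs.trans (by nlinarith)
      have hkey := aux_exp_le hu
      have he : Real.exp (l * g y) = Real.exp (l * g x) * Real.exp (l * (g y - g x)) := by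
        rw [← Real.exp_add]; ring_nf
      rw [he]
      apply mul_le_mul_of_nonneg_left _ (Real.exp_pos _).le
      have h1 : (l * (g y - g x)) ^ 2 ≤ l ^ 2 * c ^ 2 := by
        have := abs_nonneg (l * (g y - g x))
        nlinarith [sq_abs (l * (g y - g x))]
      calc Real.exp (l * (g y - g x))
          ≤ 1 + l * (g y - g x) + (l * (g y - g x)) ^ 2 / 2 * Real.exp (2 * l) := hkey
        _ ≤ 1 + l * (g y - g x) + K := by
            rw [hK]
            have := (Real.exp_pos (2 * l)).le
            nlinarith
  have hs1 : ∑ y, m x y = 1 := (hm x).1.2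
  have hsum : Mop m (fun y => Real.exp (l * g y)) x ≤
      Real.exp (l * g x) * (1 + l * (Mop m g x - g x) + K) := by
    calc Mop m (fun y => Real.exp (l * g y)) x
        ≤ ∑ y, (Real.exp (l * g x) * (1 + l * (g y - g x) + K)) * m x y :=
          Finset.sum_le_sum fun y _ => step y
      _ = Real.exp (l * g x) * (1 + l * (Mop m g x - g x) + K) := by
          rw [Finset.sum_congr rfl fun y (_ : y ∈ Finset.univ) =>
            (by ring : (Real.exp (l * g x) * (1 + l * (g y - g x) + K)) * m x y =
              (Real.exp (l * g x) * (1 - l * g x + K)) * m x y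
                + (Real.exp (l * g x) * l) * (g y * m x y)),
            Finset.sum_add_distrib, ← Finset.mul_sum, ← Finset.mul_sum, hs1]
          show Real.exp (l * g x) * (1 - l * g x + K) * 1
              + Real.exp (l * g x) * l * Mop m g x = _
          ring
  calc Mop m (fun y => Real.exp (l * g y)) x
      ≤ Real.exp (l * g x) * (1 + l * (Mop m g x - g x) + K) := hsum
    _ ≤ Real.exp (l * g x) * Real.exp (l * (Mop m g x - g x) + K) := by
        apply mul_le_mul_of_nonneg_left _ (Real.exp_pos _).le
        have := Real.add_one_le_exp (l * (Mop m g x - g x) + K)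
        linarith
    _ = Real.exp (l * Mop m g x + K) := by rw [← Real.exp_add]; ring_nf

end graph

/-- exponential moment bound at the invariant distribution.
For a finite graph with ergodic random walk, invariant distribution `ν`, Ricci
curvature at least `κ > 0`, a 1-Lipschitz `f`, and `0 < λ ≤ λ₀` where
`λ₀·e^{2λ₀} = 2(2-κ)`, we have
`E_ν[e^{λf}] ≤ exp(λ·E_ν[f] + λ²e^{2λ}/(2κ(2-κ)))`. -/
theorem exp_moment_bound {V : Type*} [Fintype V] (G : SimpleGraph V)
    (hG : G.Connected) (m : V → V → ℝ) (hm : IsRandomWalk G m)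
    (ν : V → ℝ) (hν : IsProbVec ν) (hinv : ∀ y : V, ∑ x, ν x * m x y = ν y)
    (herg : ∀ (g : V → ℝ) (x : V),
      Tendsto (fun i => (Mop m)^[i] g x) atTop (nhds (∑ y, ν y * g y)))
    (κ : ℝ) (hκpos : 0 < κ) (hκ : ∀ x y : V, x ≠ y → κ ≤ ricci G m x y)
    (f : V → ℝ) (hf : ∀ x y : V, G.Adj x y → |f x - f y| ≤ 1)
    (l l₀ : ℝ) (hl₀ : l₀ * Real.exp (2 * l₀) = 2 * (2 - κ))
    (hl : 0 < l) (hll₀ : l ≤ l₀) :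
    ∑ x, ν x * Real.exp (l * f x) ≤
      Real.exp (l * (∑ x, ν x * f x) + l ^ 2 * Real.exp (2 * l) / (2 * κ * (2 - κ))) := by
  classical
  have hne : Nonempty V := by
    by_contra h
    rw [not_nonempty_iff] at h
    have h2 := hν.2
    rw [Finset.univ_eq_empty, Finset.sum_empty] at h2
    norm_num at h2
  obtain ⟨x₀⟩ := hne
  have hl₀pos : 0 < l₀ := lt_of_lt_of_le hl hll₀
  have hκ2 : κ < 2 := by
    have h2 : 0 < l₀ * Real.exp (2 * l₀) := mul_pos hl₀pos (Real.exp_pos _)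
    rw [hl₀] at h2; linarith
  set δ : ℝ := |1 - κ| with hδdef
  have hδ0 : 0 ≤ δ := abs_nonneg _
  have hδ1 : δ < 1 := by
    rw [hδdef, abs_lt]; constructor <;> linarith
  have hgeom : ∀ i : ℕ, ∑ j ∈ Finset.range i, δ ^ (2 * j) ≤ 1 / (κ * (2 - κ)) := by
    intro i
    have hδδ : δ ^ 2 < 1 := by nlinarith
    have hident : 1 - δ ^ 2 = κ * (2 - κ) := by
      rw [hδdef, sq_abs]; ring
    have hpos : 0 < 1 - δ ^ 2 := by linarith
    have hsq : ∑ j ∈ Finset.range i, δ ^ (2 * j) = ∑ j ∈ Finset.range i, (δ ^ 2) ^ j :=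
      Finset.sum_congr rfl fun j _ => by rw [← pow_mul]
    rw [hsq, ← hident, le_div_iff₀ hpos]
    nlinarith [geom_sum_mul (δ ^ 2) i, pow_nonneg (sq_nonneg δ) i]
  have hiter : ∀ (i : ℕ) (x : V),
      (Mop m)^[i] (fun y => Real.exp (l * f y)) x ≤
        Real.exp (l * (Mop m)^[i] f x +
          l ^ 2 * Real.exp (2 * l) / 2 * ∑ j ∈ Finset.range i, δ ^ (2 * j)) := by
    intro i
    induction i with
    | zero => intro x; simp
    | succ i ih =>
      intro x
      rw [Function.iterate_succ_apply', Function.iterate_succ_apply']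
      set Ci := l ^ 2 * Real.exp (2 * l) / 2 * ∑ j ∈ Finset.range i, δ ^ (2 * j) with hCi
      have hmono : Mop m ((Mop m)^[i] (fun y => Real.exp (l * f y))) x ≤
          Mop m (fun y => Real.exp Ci * Real.exp (l * (Mop m)^[i] f y)) x := by
        apply Finset.sum_le_sum
        intro y _
        apply mul_le_mul_of_nonneg_right _ ((hm x).1.1 y)
        calc (Mop m)^[i] (fun y => Real.exp (l * f y)) y
            ≤ Real.exp (l * (Mop m)^[i] f y + Ci) := ih y
          _ = Real.exp Ci * Real.exp (l * (Mop m)^[i] f y) := by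
              rw [← Real.exp_add, add_comm]
      have hconst : Mop m (fun y => Real.exp Ci * Real.exp (l * (Mop m)^[i] f y)) x =
          Real.exp Ci * Mop m (fun y => Real.exp (l * (Mop m)^[i] f y)) x := by
        simp only [Mop, Finset.mul_sum]
        exact Finset.sum_congr rfl fun y _ => by ring
      have hlipg : ∀ y : V, m x y ≠ 0 → |(Mop m)^[i] f y - (Mop m)^[i] f x| ≤ δ ^ i := by
        intro y hy
        rcases (hm x).2 y hy with rfl | hadj
        · simp only [sub_self, abs_zero]
          positivity
        · have hd : G.dist y x = 1 := SimpleGraph.dist_eq_one_iff_adj.mpr hadj.symm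
          have h3 := lip_iter hG hm hκ hf i y x
          rw [hd] at h3
          simpa using h3
      have hstep := mop_exp_le hm x hl (pow_nonneg hδ0 i)
        (le_trans (pow_le_one₀ hδ0 hδ1.le) one_le_two) hlipg
      calc Mop m ((Mop m)^[i] (fun y => Real.exp (l * f y))) x
          ≤ Real.exp Ci * Mop m (fun y => Real.exp (l * (Mop m)^[i] f y)) x := by
            rw [← hconst]; exact hmono
        _ ≤ Real.exp Ci * Real.exp (l * Mop m ((Mop m)^[i] f) x
              + l ^ 2 * (δ ^ i) ^ 2 / 2 * Real.exp (2 * l)) :=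
            mul_le_mul_of_nonneg_left hstep (Real.exp_pos _).le
        _ = Real.exp (l * Mop m ((Mop m)^[i] f) x +
              l ^ 2 * Real.exp (2 * l) / 2 * ∑ j ∈ Finset.range (i + 1), δ ^ (2 * j)) := by
            rw [← Real.exp_add]
            congr 1
            rw [Finset.sum_range_succ, hCi]
            ring
  set C := l ^ 2 * Real.exp (2 * l) / (2 * κ * (2 - κ)) with hC
  have hbound : ∀ i : ℕ,
      (Mop m)^[i] (fun y => Real.exp (l * f y)) x₀ ≤ Real.exp (l * (Mop m)^[i] f x₀ + C) := by
    intro i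
    refine (hiter i x₀).trans (Real.exp_le_exp.mpr ?_)
    have h1 := hgeom i
    have h2 : (0:ℝ) ≤ l ^ 2 * Real.exp (2 * l) / 2 := by positivity
    have h3 : l ^ 2 * Real.exp (2 * l) / 2 * ∑ j ∈ Finset.range i, δ ^ (2 * j) ≤
        l ^ 2 * Real.exp (2 * l) / 2 * (1 / (κ * (2 - κ))) :=
      mul_le_mul_of_nonneg_left h1 h2
    have heq : l ^ 2 * Real.exp (2 * l) / 2 * (1 / (κ * (2 - κ))) = C := by
      rw [hC]
      field_simp
    linarith
  have t1 := herg (fun y => Real.exp (l * f y)) x₀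
  have t2 : Tendsto (fun i => Real.exp (l * (Mop m)^[i] f x₀ + C)) atTop
      (nhds (Real.exp (l * (∑ y, ν y * f y) + C))) := by
    apply (Real.continuous_exp.tendsto _).comp
    exact ((herg f x₀).const_mul l).add_const C
  exact le_of_tendsto_of_tendsto' t1 t2 hbound
end
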